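/- arXiv:1012.3721 — 7 statements merged into one kernel-verified Lean document; each statement's English description precedes it below -/
import Mathlib

section
/- Let b ≥ 2 be an integer and let x and y be nonzero integers, with unique (−b)-representations ⟨x⟩_{−b} and ⟨y⟩_{−b} (words over {0, …, b−1} with nonzero leading digit). Then x < y if and only if ⟨x⟩_{−b} ≺_sa ⟨y⟩_{−b} in the short-alternate order. -/
/-- The value of a finite digit word (most significant digit first) in base `-b`:
`valNegB b (w_k ⋯ w_0) = Σ_{i=0}^{k} w_i (-b)^i`, computed by Horner's rule. -/
def valNegB (b : ℤ) (w : List ℤ) : ℤ :=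
  w.foldl (fun acc d => -b * acc + d) 0

/-- `w` is the (-b)-representation of `N` (most significant digit first): a nonempty word
with digits in `{0, …, b-1}`, nonzero leading digit, and value `N`. -/
def IsNegRep (b N : ℤ) (w : List ℤ) : Prop :=
  w ≠ [] ∧ (∀ d ∈ w, 0 ≤ d ∧ d < b) ∧ w.head? ≠ some 0 ∧ valNegB b w = N

/-- The alternate order on finite words of the same length (1-indexed positions: the entry
at list index `k` is the letter at position `k+1`, whence the sign `(-1)^(k+1)`). -/
def AltLtW (u v : List ℤ) : Prop :=
  ∃ k : ℕ, k < u.length ∧ k < v.length ∧ (∀ i < k, u.getD i 0 = v.getD i 0) ∧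
    (-1 : ℤ) ^ (k + 1) * (u.getD k 0 - v.getD k 0) < 0

/-- Pad a word on the left with the letter `0 = min A` up to length `n`. -/
def padTo (n : ℕ) (u : List ℤ) : List ℤ :=
  List.replicate (n - u.length) 0 ++ u

/-- The short-alternate order `≺_sa` on finite words over `{0, …, b-1}` (with `min A = 0`):
(i) both lengths odd and `ℓ < m`, or equal odd lengths and `0u ≺_alt 0v`;
(ii) both lengths even and `ℓ > m`, or equal even lengths and `u ≺_alt v`;
(iii) `ℓ < m`: compare `0^{m-ℓ}u` with `v`; (iv) `ℓ > m`: compare `u` with `0^{ℓ-m}v`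
(cases (iii) and (iv) are unfolded via their reduction to words of equal length). -/
def SaLt (u v : List ℤ) : Prop :=
  (Odd u.length ∧ Odd v.length ∧ u.length < v.length) ∨
  (Even u.length ∧ Even v.length ∧ v.length < u.length) ∨
  (Odd (max u.length v.length) ∧
    AltLtW (0 :: padTo (max u.length v.length) u) (0 :: padTo (max u.length v.length) v)) ∨
  (Even (max u.length v.length) ∧
    AltLtW (padTo (max u.length v.length) u) (padTo (max u.length v.length) v))

/-!
The value of a word `d w` of length `n + 1` is `(-b)^n d + ⟨w⟩`, and the values of two words
of length `n` differ by less than `b^n`. Hence words of equal length compare like their first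
differing digits, in a direction that alternates with the position:
`(-1)^n ⟨u⟩ < (-1)^n ⟨v⟩` iff `u ≺_alt v`. Leading zeros do not change the value, so `x < y` is
the alternate comparison of the representations padded to a common even length, i.e. clauses
(iii) and (iv) of `≺_sa`. Clauses (i) and (ii) are special cases of these, since the longer
representation begins with a nonzero digit where the padded shorter one has a `0`.
-/

section Value

variable {b : ℤ}

lemma foldl_negB_eq (w : List ℤ) (a : ℤ) :
    w.foldl (fun acc d => -b * acc + d) a = (-b) ^ w.length * a + valNegB b w := by
  induction w generalizing a with
  | nil => simp [valNegB]
  | cons d w ih =>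
    simp only [valNegB, List.foldl_cons, List.length_cons] at ih ⊢
    rw [ih, ih (-b * 0 + d), pow_succ]
    ring

lemma valNegB_cons (d : ℤ) (w : List ℤ) :
    valNegB b (d :: w) = (-b) ^ w.length * d + valNegB b w := by
  rw [valNegB, List.foldl_cons, foldl_negB_eq]
  ring

lemma valNegB_padTo (n : ℕ) (w : List ℤ) : valNegB b (padTo n w) = valNegB b w := by
  rw [padTo]
  induction n - w.length with
  | zero => simp
  | succ k ih => rw [List.replicate_succ, List.cons_append, valNegB_cons, ih, mul_zero, zero_add]

lemma abs_valNegB_sub_lt {u v : List ℤ} (hlen : u.length = v.length)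
    (hu : ∀ d ∈ u, 0 ≤ d ∧ d < b) (hv : ∀ d ∈ v, 0 ≤ d ∧ d < b) :
    |valNegB b u - valNegB b v| < b ^ u.length := by
  induction u generalizing v with
  | nil =>
    obtain rfl := List.eq_nil_of_length_eq_zero hlen.symm
    simp [valNegB]
  | cons d u ih =>
    obtain _ | ⟨e, v⟩ := v
    · simp at hlen
    obtain ⟨hd0, hdb⟩ := hu d List.mem_cons_self
    obtain ⟨he0, heb⟩ := hv e List.mem_cons_self
    have hrest := ih (by simpa using hlen) (fun c hc => hu c (List.mem_cons_of_mem d hc))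
      (fun c hc => hv c (List.mem_cons_of_mem e hc))
    have hde : |d - e| ≤ b - 1 := abs_sub_le_iff.mpr ⟨by linarith, by linarith⟩
    have hpow : 0 ≤ b ^ u.length := pow_nonneg (by linarith) _
    rw [valNegB_cons, valNegB_cons, ← (by simpa using hlen : u.length = v.length)]
    calc |(-b) ^ u.length * d + valNegB b u - ((-b) ^ u.length * e + valNegB b v)|
        = |(-b) ^ u.length * (d - e) + (valNegB b u - valNegB b v)| := by ring_nf
      _ ≤ b ^ u.length * |d - e| + |valNegB b u - valNegB b v| := by
        grw [abs_add_le, abs_mul, abs_pow, abs_neg, abs_of_nonneg (by linarith : 0 ≤ b)]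
      _ < b ^ u.length * (b - 1) + b ^ u.length := by
        have := mul_le_mul_of_nonneg_left hde hpow
        linarith
      _ = b ^ (d :: u).length := by rw [List.length_cons, pow_succ]; ring

end Value

lemma lt_or_eq_and_lt_iff_of_abs_sub_lt {B d e r s : ℤ} (h : |r - s| < B) :
    B * d + r < B * e + s ↔ d < e ∨ (d = e ∧ r < s) := by
  obtain ⟨h₁, h₂⟩ := abs_sub_lt_iff.mp h
  rcases lt_trichotomy d e with hde | rfl | hde
  · have : B * d + B ≤ B * e := by nlinarith
    simp only [hde, true_or, iff_true]
    linarith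
  · simp
  · have : B * e + B ≤ B * d := by nlinarith
    simp only [hde.not_gt, hde.ne', false_and, or_self, iff_false, not_lt]
    linarith

lemma altLtW_cons_cons {d e : ℤ} {u v : List ℤ} :
    AltLtW (d :: u) (e :: v) ↔ e < d ∨ (d = e ∧ AltLtW v u) := by
  constructor
  · rintro ⟨_ | k, hku, hkv, hagree, hsign⟩
    · left
      simpa using hsign
    · refine .inr ⟨by simpa using hagree 0 k.succ_pos, k, by simpa using hkv,
        by simpa using hku, fun i hi => ?_, ?_⟩
      · simpa using (hagree (i + 1) (by omega)).symm
      · simp only [List.getD_cons_succ] at hsign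
        rw [pow_succ _ (k + 1)] at hsign
        linarith
  · rintro (hlt | ⟨rfl, k, hkv, hku, hagree, hsign⟩)
    · exact ⟨0, by simp, by simp, by simp, by simpa using hlt⟩
    · refine ⟨k + 1, by simpa using hku, by simpa using hkv, ?_, ?_⟩
      · rintro (_ | i) hi
        · rfl
        · simpa using (hagree i (by omega)).symm
      · simp only [List.getD_cons_succ]
        rw [pow_succ _ (k + 1)]
        linarith

lemma altLtW_iff {b : ℤ} {u v : List ℤ} (hlen : u.length = v.length)
    (hu : ∀ d ∈ u, 0 ≤ d ∧ d < b) (hv : ∀ d ∈ v, 0 ≤ d ∧ d < b) :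
    AltLtW u v ↔ (-1) ^ u.length * valNegB b u < (-1) ^ u.length * valNegB b v := by
  obtain ⟨n, hn⟩ : ∃ n, u.length = n := ⟨_, rfl⟩
  induction n generalizing u v with
  | zero =>
    obtain rfl := List.eq_nil_of_length_eq_zero hn
    obtain rfl := List.eq_nil_of_length_eq_zero (hlen.symm.trans hn)
    simp [AltLtW]
  | succ n ih =>
    obtain _ | ⟨d, u⟩ := u
    · simp at hn
    obtain _ | ⟨e, v⟩ := v
    · simp at hlen
    have hun : u.length = n := by simpa using hn
    have hvn : v.length = n := by simpa [hun] using hlen.symm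
    have hu' : ∀ c ∈ u, 0 ≤ c ∧ c < b := fun c hc => hu c (List.mem_cons_of_mem d hc)
    have hv' : ∀ c ∈ v, 0 ≤ c ∧ c < b := fun c hc => hv c (List.mem_cons_of_mem e hc)
    have hbound : |(-1) ^ n * valNegB b v - (-1) ^ n * valNegB b u| < b ^ n := by
      rw [← mul_sub, abs_mul, abs_pow, abs_neg, abs_one, one_pow, one_mul, ← hvn]
      exact abs_valNegB_sub_lt (hvn.trans hun.symm) hv' hu'
    have hsq : ((-1 : ℤ) ^ n) * (-1) ^ n = 1 := by rw [← mul_pow]; norm_num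
    have hexpand : ∀ c w : ℤ, (-1) ^ (n + 1) * ((-b) ^ n * c + w)
        = -(b ^ n * c + (-1) ^ n * w) := by
      intro c w
      rw [neg_pow b]
      linear_combination (-(b ^ n * c)) * hsq
    rw [altLtW_cons_cons, ih (hvn.trans hun.symm) hv' hu' hvn, eq_comm, hn, valNegB_cons,
      valNegB_cons, hun, hvn, hexpand, hexpand, neg_lt_neg_iff,
      lt_or_eq_and_lt_iff_of_abs_sub_lt hbound]

section Padding

variable {u v : List ℤ} {n : ℕ}

lemma length_padTo (h : u.length ≤ n) : (padTo n u).length = n := by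
  simp only [padTo, List.length_append, List.length_replicate]
  omega

lemma padTo_length_self : padTo u.length u = u := by
  simp [padTo]

lemma zero_cons_padTo (h : u.length ≤ n) : 0 :: padTo n u = padTo (n + 1) u := by
  rw [padTo, padTo, Nat.sub_add_comm h, List.replicate_succ, List.cons_append]

lemma mem_padTo {d : ℤ} (h : d ∈ padTo n u) : d = 0 ∨ d ∈ u := by
  rcases List.mem_append.mp h with h | h
  · exact .inl (List.eq_of_mem_replicate h)
  · exact .inr h

lemma altLtW_padTo_iff {b : ℤ} (hb : 0 < b) (hn : Even n) (hun : u.length ≤ n)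
    (hvn : v.length ≤ n) (hu : ∀ d ∈ u, 0 ≤ d ∧ d < b) (hv : ∀ d ∈ v, 0 ≤ d ∧ d < b) :
    AltLtW (padTo n u) (padTo n v) ↔ valNegB b u < valNegB b v := by
  have digits : ∀ w : List ℤ, (∀ d ∈ w, 0 ≤ d ∧ d < b) → ∀ d ∈ padTo n w, 0 ≤ d ∧ d < b :=
    fun w hw d hd => (mem_padTo hd).elim (fun h => by rw [h]; exact ⟨le_rfl, hb⟩) (hw d)
  rw [altLtW_iff ((length_padTo hun).trans (length_padTo hvn).symm) (digits u hu) (digits v hv),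
    length_padTo hun, hn.neg_one_pow, one_mul, one_mul, valNegB_padTo, valNegB_padTo]

lemma altLtW_padTo_of_length_lt (h : u.length < v.length) (hv : v.head? ≠ some 0)
    (hv0 : ∀ d ∈ v, 0 ≤ d) : AltLtW v (padTo v.length u) := by
  obtain _ | ⟨e, v⟩ := v
  · simp at h
  have he : 0 < e := lt_of_le_of_ne (hv0 e List.mem_cons_self) (fun he => hv (by simp [he]))
  rw [List.length_cons, ← zero_cons_padTo (by simpa [Nat.lt_succ_iff] using h),
    altLtW_cons_cons]
  exact .inl he

end Padding

/-- The clauses (iii) and (iv) of `SaLt`. -/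
def PaddedAltLt (u v : List ℤ) : Prop :=
  (Odd (max u.length v.length) ∧
    AltLtW (0 :: padTo (max u.length v.length) u) (0 :: padTo (max u.length v.length) v)) ∨
  (Even (max u.length v.length) ∧
    AltLtW (padTo (max u.length v.length) u) (padTo (max u.length v.length) v))

lemma valNegB_lt_iff_paddedAltLt {b : ℤ} (hb : 0 < b) {u v : List ℤ}
    (hu : ∀ d ∈ u, 0 ≤ d ∧ d < b) (hv : ∀ d ∈ v, 0 ≤ d ∧ d < b) :
    valNegB b u < valNegB b v ↔ PaddedAltLt u v := by
  unfold PaddedAltLt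
  have hun := le_max_left u.length v.length
  have hvn := le_max_right u.length v.length
  rcases Nat.even_or_odd (max u.length v.length) with hn | hn
  · simp only [hn, Nat.not_odd_iff_even.mpr hn, false_and, true_and, false_or]
    exact (altLtW_padTo_iff hb hn hun hvn hu hv).symm
  · simp only [hn, Nat.not_even_iff_odd.mpr hn, false_and, true_and, or_false]
    rw [zero_cons_padTo hun, zero_cons_padTo hvn]
    exact (altLtW_padTo_iff hb hn.add_one (by omega) (by omega) hu hv).symm

lemma saLt_iff_paddedAltLt {u v : List ℤ} (hu : u.head? ≠ some 0) (hv : v.head? ≠ some 0)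
    (hu0 : ∀ d ∈ u, 0 ≤ d) (hv0 : ∀ d ∈ v, 0 ≤ d) :
    SaLt u v ↔ PaddedAltLt u v := by
  refine ⟨?_, fun h => .inr (.inr h)⟩
  unfold PaddedAltLt
  rintro (⟨-, hodd, hlt⟩ | ⟨heven, -, hlt⟩ | h | h)
  · rw [max_eq_right hlt.le, padTo_length_self]
    exact .inl ⟨hodd, altLtW_cons_cons.mpr (.inr ⟨rfl, altLtW_padTo_of_length_lt hlt hv hv0⟩)⟩
  · rw [max_eq_left hlt.le, padTo_length_self]
    exact .inr ⟨heven, altLtW_padTo_of_length_lt hlt hu hu0⟩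
  · exact .inl h
  · exact .inr h

theorem lt_iff_shortAlternate_general (b : ℤ) (hb : 2 ≤ b) (x y : ℤ)
    (u v : List ℤ) (hu : IsNegRep b x u) (hv : IsNegRep b y v) :
    x < y ↔ SaLt u v := by
  obtain ⟨-, hu_digits, hu_head, rfl⟩ := hu
  obtain ⟨-, hv_digits, hv_head, rfl⟩ := hv
  rw [valNegB_lt_iff_paddedAltLt (by omega) hu_digits hv_digits,
    saLt_iff_paddedAltLt hu_head hv_head (fun d hd => (hu_digits d hd).1) (fun d hd => (hv_digits d hd).1)]

/-- For nonzero integers `x, y` with (-b)-representations `u, v`, we have `x < y` iff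
`u ≺_sa v` in the short-alternate order. -/
theorem lt_iff_shortAlternate (b : ℤ) (hb : 2 ≤ b) (x y : ℤ) (hx : x ≠ 0) (hy : y ≠ 0)
    (u v : List ℤ) (hu : IsNegRep b x u) (hv : IsNegRep b y v) :
    x < y ↔ SaLt u v :=
  lt_iff_shortAlternate_general b hb x y u v hu hv
end

section
/- Let A be a finite alphabet of integers and let s = s_1s_2⋯ be an alternately shift minimal infinite word over A. The subshift S(s) = {w = (w_i)_{i∈ℤ} ∈ A^ℤ : for all n, s ⪯_alt w_n w_{n+1}⋯} is sofic if and only if s is eventually periodic. -/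
/-- Strict alternate order on one-sided infinite words (index `k` holds the letter at
position `k+1`, whence the sign `(-1)^(k+1)`). -/
def AltLt (u v : ℕ → ℤ) : Prop :=
  ∃ k : ℕ, (∀ i < k, u i = v i) ∧ (-1 : ℤ) ^ (k + 1) * (u k - v k) < 0

/-- Non-strict alternate order. -/
def AltLe (u v : ℕ → ℤ) : Prop := u = v ∨ AltLt u v

/-- The one-sided word read in the bi-infinite word `w` from position `n` on. -/
def shiftSeq (w : ℤ → ℤ) (n : ℤ) : ℕ → ℤ := fun i => w (n + i)

/-- The subshift `S(s)` of all bi-infinite words over `A` all of whose shifts are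
`⪰_alt s`. -/
def Ss (A : Finset ℤ) (s : ℕ → ℤ) : Set (ℤ → ℤ) :=
  {w | (∀ i, w i ∈ A) ∧ ∀ n : ℤ, AltLe s (shiftSeq w n)}

/-- `u` is a factor of the bi-infinite word `w`. -/
def IsFactorOf (u : List ℤ) (w : ℤ → ℤ) : Prop :=
  ∃ n : ℤ, ∀ i : ℕ, i < u.length → u.getD i 0 = w (n + i)

/-- The language of finite factors of a set of bi-infinite words. -/
def factorLang (S : Set (ℤ → ℤ)) : Language ℤ :=
  {u | ∃ w ∈ S, IsFactorOf u w}

namespace SoficAux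

/-- Admissibility of a finite word: no suffix becomes alternately smaller than `s`. -/
def Adm (s : ℕ → ℤ) (u : List ℤ) : Prop :=
  ∀ j k : ℕ, j + k < u.length → (∀ i < k, u.getD (j + i) 0 = s i) →
    0 ≤ (-1 : ℤ) ^ (k + 1) * (u.getD (j + k) 0 - s k)

/-- Factors of the subshift are admissible. -/
lemma factor_adm {A : Finset ℤ} {s : ℕ → ℤ} {u : List ℤ}
    (hu : u ∈ factorLang (Ss A s)) :
    (∀ i < u.length, u.getD i 0 ∈ A) ∧ Adm s u := by
  obtain ⟨w, ⟨hwA, hws⟩, n, hn⟩ := hu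
  constructor
  · intro i hi; rw [hn i hi]; exact hwA _
  · intro j k hjk hag
    have hv : ∀ i : ℕ, j + i < u.length → shiftSeq w (n + j) i = u.getD (j + i) 0 := by
      intro i hi
      rw [hn (j + i) hi]
      show w (n + ↑j + ↑i) = w (n + ↑(j + i))
      congr 1; push_cast; ring
    rcases hws (n + j) with he | ⟨k', hag', hlt'⟩
    · have h1 : s k = u.getD (j + k) 0 := by
        rw [he]; exact hv k hjk
      rw [← h1]; simp
    · rcases lt_trichotomy k' k with h1 | rfl | h3
      · exfalso
        have h2 : u.getD (j + k') 0 = s k' := hag k' h1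
        have h3' : shiftSeq w (n + j) k' = u.getD (j + k') 0 := hv k' (by omega)
        have : s k' - shiftSeq w (n + j) k' = 0 := by rw [h3', h2]; ring
        rw [this, mul_zero] at hlt'
        exact lt_irrefl 0 hlt'
      · have h3' : shiftSeq w (n + j) k' = u.getD (j + k') 0 := hv k' hjk
        rw [h3'] at hlt'
        nlinarith [hlt']
      · have h2 : s k = shiftSeq w (n + j) k := hag' k h3
        have h3' : shiftSeq w (n + j) k = u.getD (j + k) 0 := hv k hjk
        rw [h2, h3']; simp

/-- If `s` is not constant, then `s 1 < max A`. -/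
lemma s_one_lt {A : Finset ℤ} (hA : A.Nonempty) {s : ℕ → ℤ}
    (hsA : ∀ i, s i ∈ A) (hmax : s 0 = A.max' hA)
    (hasmin : ∀ n : ℕ, AltLe s (fun i => s (n + i)))
    (hne : ∃ i, s i ≠ A.max' hA) : s 1 < A.max' hA := by
  classical
  set Mx := A.max' hA with hMx
  have hle : ∀ i, s i ≤ Mx := fun i => A.le_max' _ (hsA i)
  set k := Nat.find hne with hkdef
  have hk : s k ≠ Mx := Nat.find_spec hne
  have hmin : ∀ i < k, s i = Mx := fun i hi => not_not.mp (Nat.find_min hne hi)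
  have hk0 : k ≠ 0 := fun h => hk (by rw [h, hmax])
  rcases Nat.lt_or_ge k 2 with hk2 | hk2
  · have : k = 1 := by omega
    rw [this] at hk
    exact lt_of_le_of_ne (hle 1) hk
  · exfalso
    have h := hasmin (k - 1)
    rcases h with he | ⟨k', hag, hlt⟩
    · have := congrFun he 1
      rw [show k - 1 + 1 = k by omega] at this
      exact hk (by rw [← this, hmin 1 (by omega)])
    · match k', hag, hlt with
      | 0, hag, hlt =>
        simp only at hlt
        rw [show k - 1 + 0 = k - 1 by ring, hmin (k-1) (by omega), hmax] at hlt
        simp at hlt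
      | 1, hag, hlt =>
        simp only at hlt
        rw [show k - 1 + 1 = k by omega, hmin 1 (by omega)] at hlt
        have := hle k
        norm_num at hlt
        linarith
      | (k'' + 2), hag, hlt =>
        have := hag 1 (by omega)
        simp only at this
        rw [show k - 1 + 1 = k by omega] at this
        exact hk (by rw [← this, hmin 1 (by omega)])


/-- one-sided extension of an admissible word by a tail of `s`. -/
def ext (s : ℕ → ℤ) (u : List ℤ) (t : ℕ) : ℕ → ℤ :=
  fun i => if i < u.length then u.getD i 0 else s (t + (i - u.length))

/-- bi-infinite word: constant `a` to the left, `y` to the right. -/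
def biw (a : ℤ) (y : ℕ → ℤ) : ℤ → ℤ := fun n => if n < 0 then a else y n.toNat

lemma biw_mem {A : Finset ℤ} (hA : A.Nonempty) {s : ℕ → ℤ}
    (hmax : s 0 = A.max' hA) {a : ℤ} {y : ℕ → ℤ} (ha : a ∈ A) (halt : a < A.max' hA)
    (hyA : ∀ i, y i ∈ A) (hy : ∀ j : ℕ, AltLe s (fun i => y (j + i))) :
    biw a y ∈ Ss A s := by
  constructor
  · intro i
    unfold biw
    split
    · exact ha
    · exact hyA _
  · intro n
    rcases lt_or_ge n 0 with hn | hn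
    · refine Or.inr ⟨0, fun i hi => absurd hi (Nat.not_lt_zero i), ?_⟩
      have h0 : shiftSeq (biw a y) n 0 = a := by
        unfold shiftSeq biw
        rw [show n + (0:ℕ) = n by push_cast; ring, if_pos hn]
      rw [h0, hmax]
      have hrw : (-1:ℤ)^(0+1) * (A.max' hA - a) = a - A.max' hA := by ring
      rw [hrw]
      linarith
    · have heq : shiftSeq (biw a y) n = fun i => y (n.toNat + i) := by
        funext i
        unfold shiftSeq biw
        rw [if_neg (by omega)]
        congr 1
        rw [Int.toNat_add hn (by positivity), Int.toNat_natCast]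
      rw [heq]
      exact hy n.toNat

lemma ext_shifts_ge {s : ℕ → ℤ} (hasmin : ∀ n : ℕ, AltLe s (fun i => s (n + i)))
    {u : List ℤ} (hadm : Adm s u) {t : ℕ} (ht : t ≤ u.length)
    (hPt : ∀ i < t, u.getD (u.length - t + i) 0 = s i)
    (htmax : ∀ d ≤ u.length, (∀ i < d, u.getD (u.length - d + i) 0 = s i) → d ≤ t) :
    ∀ j : ℕ, AltLe s (fun i => ext s u t (j + i)) := by
  intro j
  set len := u.length with hlen
  rcases le_or_gt len j with hj | hj
  · have heq : (fun i => ext s u t (j + i)) = fun i => s ((t + (j - len)) + i) := by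
      funext i
      unfold ext
      rw [if_neg (by omega)]
      congr 1
      omega
    rw [heq]
    exact hasmin _
  · by_cases hb : ∀ i, j + i < len → u.getD (j + i) 0 = s i
    · set d := len - j with hd
      have hd1 : 1 ≤ d := by omega
      have hdt : d ≤ t := by
        refine htmax d (by omega) ?_
        intro i hi
        rw [show len - d + i = j + i by omega]
        exact hb i (by omega)
      have heq : (fun i => ext s u t (j + i)) = fun i => s ((t - d) + i) := by
        funext i
        unfold ext
        by_cases hi : j + i < len
        · rw [if_pos hi]
          have h2 := hPt (t - d + i) (by omega)
          rw [show len - t + (t - d + i) = j + i by omega] at h2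
          rw [h2]
        · rw [if_neg hi]
          congr 1
          omega
      rw [heq]
      exact hasmin _
    · push_neg at hb
      obtain ⟨i0, hi0len, hi0ne⟩ := hb
      have hexk : ∃ k, j + k < len ∧ u.getD (j + k) 0 ≠ s k := ⟨i0, hi0len, hi0ne⟩
      classical
      set k := Nat.find hexk with hkdef
      obtain ⟨hklen, hkne⟩ := Nat.find_spec hexk
      have hag : ∀ i < k, s i = (fun i => ext s u t (j + i)) i := by
        intro i hi
        have h1 : ¬(j + i < len ∧ u.getD (j + i) 0 ≠ s i) := Nat.find_min hexk hi
        have h2 : j + i < len := by omega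
        have h3 : u.getD (j + i) 0 = s i := by tauto
        show s i = ext s u t (j + i)
        unfold ext
        rw [if_pos h2, h3]
      refine Or.inr ⟨k, hag, ?_⟩
      have hx := hadm j k hklen (fun i hi => by
        have h1 : ¬(j + i < len ∧ u.getD (j + i) 0 ≠ s i) := Nat.find_min hexk hi
        have h2 : j + i < len := by omega
        tauto)
      have hxne : (-1:ℤ) ^ (k + 1) * (u.getD (j + k) 0 - s k) ≠ 0 :=
        mul_ne_zero (pow_ne_zero _ (by norm_num)) (sub_ne_zero.2 hkne)
      have hxpos : 0 < (-1:ℤ) ^ (k + 1) * (u.getD (j + k) 0 - s k) :=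
        lt_of_le_of_ne hx (Ne.symm hxne)
      show (-1:ℤ) ^ (k + 1) * (s k - ext s u t (j + k)) < 0
      have he : ext s u t (j + k) = u.getD (j + k) 0 := by
        unfold ext; rw [if_pos hklen]
      rw [he]
      nlinarith [hxpos]

/-- Admissible words (with letters in `A`) are factors of the subshift. -/
lemma adm_factor {A : Finset ℤ} (hA : A.Nonempty) {s : ℕ → ℤ}
    (hsA : ∀ i, s i ∈ A) (hmax : s 0 = A.max' hA)
    (hasmin : ∀ n : ℕ, AltLe s (fun i => s (n + i)))
    {u : List ℤ} (hletters : ∀ i < u.length, u.getD i 0 ∈ A) (hadm : Adm s u) :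
    u ∈ factorLang (Ss A s) := by
  classical
  by_cases hex : ∃ a ∈ A, a < A.max' hA
  · obtain ⟨a, haA, halt⟩ := hex
    set len := u.length with hlen
    set P : ℕ → Prop := fun k => ∀ i < k, u.getD (len - k + i) 0 = s i with hP
    have : DecidablePred P := Classical.decPred P
    set t := Nat.findGreatest P len with htdef
    have hPt : P t := Nat.findGreatest_spec (Nat.zero_le len)
      (fun i h => absurd h (Nat.not_lt_zero i))
    have ht : t ≤ len := Nat.findGreatest_le len
    have htmax : ∀ d ≤ len, P d → d ≤ t := fun d hd hPd => Nat.le_findGreatest hd hPd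
    have hyA : ∀ i, ext s u t i ∈ A := by
      intro i
      unfold ext
      split
      · exact hletters _ (by omega)
      · exact hsA _
    have hy := ext_shifts_ge hasmin hadm ht hPt htmax
    refine ⟨biw a (ext s u t), biw_mem hA hmax haA halt hyA hy, 0, ?_⟩
    intro i hi
    show u.getD i 0 = biw a (ext s u t) (0 + i)
    unfold biw
    rw [if_neg (by omega)]
    have h1 : ((0:ℤ) + (i:ℤ)).toNat = i := by omega
    rw [h1]
    unfold ext
    rw [if_pos hi]
  · have haM : ∀ b ∈ A, b = A.max' hA := by
      intro b hb
      push_neg at hex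
      exact le_antisymm (A.le_max' b hb) (hex b hb)
    refine ⟨fun _ => A.max' hA, ⟨fun _ => A.max'_mem hA, fun n => Or.inl ?_⟩, 0, ?_⟩
    · funext i
      exact haM (s i) (hsA i)
    · intro i hi
      exact haM _ (hletters i hi)

/-- The factor language is exactly the admissible words. -/
lemma factor_iff {A : Finset ℤ} (hA : A.Nonempty) {s : ℕ → ℤ}
    (hsA : ∀ i, s i ∈ A) (hmax : s 0 = A.max' hA)
    (hasmin : ∀ n : ℕ, AltLe s (fun i => s (n + i))) (u : List ℤ) :
    u ∈ factorLang (Ss A s) ↔ (∀ i < u.length, u.getD i 0 ∈ A) ∧ Adm s u :=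
  ⟨factor_adm, fun ⟨h1, h2⟩ => adm_factor hA hsA hmax hasmin h1 h2⟩


/-- prefixes of `s` (indeed any list of consecutive letters of `s` from 0) are factors. -/
lemma sprefix_factor {A : Finset ℤ} (hA : A.Nonempty) {s : ℕ → ℤ}
    (hsA : ∀ i, s i ∈ A) (hmax : s 0 = A.max' hA)
    (hasmin : ∀ n : ℕ, AltLe s (fun i => s (n + i)))
    (halt : s 1 < A.max' hA)
    (L : List ℤ) (hL : ∀ i < L.length, L.getD i 0 = s i) :
    L ∈ factorLang (Ss A s) := by
  have hws : biw (s 1) s ∈ Ss A s :=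
    biw_mem hA hmax (hsA 1) halt hsA (fun j => hasmin j)
  refine ⟨biw (s 1) s, hws, 0, ?_⟩
  intro i hi
  rw [hL i hi]
  show s i = biw (s 1) s (0 + i)
  unfold biw
  rw [if_neg (by omega)]
  congr 1
  omega

lemma per_of_regular {A : Finset ℤ} (hA : A.Nonempty) {s : ℕ → ℤ}
    (hsA : ∀ i, s i ∈ A) (hmax : s 0 = A.max' hA)
    (hasmin : ∀ n : ℕ, AltLe s (fun i => s (n + i)))
    (hreg : (factorLang (Ss A s)).IsRegular) :
    ∃ m p : ℕ, 0 < p ∧ ∀ i ≥ m, s (i + p) = s i := by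
  classical
  by_cases hconst : ∀ i, s i = A.max' hA
  · exact ⟨0, 1, one_pos, fun i _ => by rw [hconst, hconst]⟩
  · push_neg at hconst
    have halt : s 1 < A.max' hA := s_one_lt hA hsA hmax hasmin hconst
    obtain ⟨σ, hfin, M, hM⟩ := hreg
    set pref : ℕ → List ℤ := fun N => List.ofFn (fun i : Fin N => s i) with hprefdef
    have hpreflen : ∀ N, (pref N).length = N := fun N => by simp [hprefdef]
    have hprefget : ∀ N, ∀ i < N, (pref N).getD i 0 = s i := by
      intro N i hi
      have hlen : i < (pref N).length := by rw [hpreflen]; exact hi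
      rw [List.getD_eq_getElem _ _ hlen]
      simp only [hprefdef]
      rw [List.getElem_ofFn]
    -- pigeonhole with parity
    obtain ⟨Na, Nb, hne, heqf⟩ := Finite.exists_ne_map_eq_of_infinite
      (fun N : ℕ => (M.eval (pref N), decide (N % 2 = 0)))
    have heqf1 : M.eval (pref Na) = M.eval (pref Nb) := congrArg Prod.fst heqf
    have heqf2 : Na % 2 = Nb % 2 := by
      have h2 : decide (Na % 2 = 0) = decide (Nb % 2 = 0) := congrArg Prod.snd heqf
      have := decide_eq_decide.mp h2
      omega
    -- key pumping claim
    have key : ∀ N1 N2 : ℕ, N1 < N2 → M.eval (pref N1) = M.eval (pref N2) →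
        N1 % 2 = N2 % 2 → ∀ d : ℕ, s (N1 + d) = s (N2 + d) := by
      intro N1 N2 hlt heval hpar d
      induction d using Nat.strong_induction_on with
      | _ d ih =>
        have hevapp : ∀ c : List ℤ, M.eval (pref N1 ++ c) = M.eval (pref N2 ++ c) := by
          intro c
          show M.evalFrom M.start (pref N1 ++ c) = M.evalFrom M.start (pref N2 ++ c)
          rw [M.evalFrom_of_append, M.evalFrom_of_append]
          rw [show M.evalFrom M.start (pref N1) = M.evalFrom M.start (pref N2) from heval]
        -- the word pref N1 ++ (s N2 ... s (N2+d)) is accepted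
        have main : ∀ Nx Ny : ℕ,
            (∀ c : List ℤ, M.eval (pref Nx ++ c) = M.eval (pref Ny ++ c)) →
            (∀ i < d, s (Nx + i) = s (Ny + i)) →
            0 ≤ (-1:ℤ) ^ (Nx + d + 1) * (s (Ny + d) - s (Nx + d)) := by
          intro Nx Ny hev hagr
          set c1 : List ℤ := List.ofFn (fun i : Fin (d+1) => s (Ny + i)) with hc1
          have hc1len : c1.length = d + 1 := by simp [hc1]
          have hc1get : ∀ i < d + 1, c1.getD i 0 = s (Ny + i) := by
            intro i hi
            have hlen : i < c1.length := by rw [hc1len]; exact hi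
            rw [List.getD_eq_getElem _ _ hlen]
            simp only [hc1]
            rw [List.getElem_ofFn]
          have hgood : pref Ny ++ c1 ∈ factorLang (Ss A s) := by
            refine sprefix_factor hA hsA hmax hasmin halt _ ?_
            intro i hi
            rw [List.length_append, hpreflen, hc1len] at hi
            rcases lt_or_ge i Ny with h | h
            · rw [List.getD_append _ _ _ _ (by rw [hpreflen]; exact h)]
              exact hprefget Ny i h
            · rw [List.getD_append_right _ _ _ _ (by rw [hpreflen]; exact h), hpreflen]
              rw [hc1get (i - Ny) (by omega)]
              congr 1
              omega
          have hmem : pref Nx ++ c1 ∈ factorLang (Ss A s) := by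
            rw [← hM, DFA.mem_accepts] at hgood ⊢
            rw [hev c1]
            exact hgood
          have hadm := (factor_adm hmem).2
          have hzlen : (pref Nx ++ c1).length = Nx + (d + 1) := by
            rw [List.length_append, hpreflen, hc1len]
          have hzget : ∀ i < Nx + d + 1, (pref Nx ++ c1).getD i 0 =
              (if i < Nx then s i else s (Ny + (i - Nx))) := by
            intro i hi
            rcases lt_or_ge i Nx with h | h
            · rw [if_pos h, List.getD_append _ _ _ _ (by rw [hpreflen]; exact h)]
              exact hprefget Nx i h
            · rw [if_neg (by omega), List.getD_append_right _ _ _ _ (by rw [hpreflen]; exact h),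
                hpreflen]
              exact hc1get (i - Nx) (by omega)
          have hagree : ∀ i < Nx + d, (pref Nx ++ c1).getD (0 + i) 0 = s i := by
            intro i hi
            rw [Nat.zero_add, hzget i (by omega)]
            split
            · rfl
            · rw [← hagr (i - Nx) (by omega)]
              congr 1
              omega
          have h1 := hadm 0 (Nx + d) (by rw [hzlen]; omega) hagree
          rw [Nat.zero_add, hzget (Nx + d) (by omega), if_neg (by omega)] at h1
          rw [show Nx + d - Nx = d by omega] at h1
          exact h1
        have hx := main N1 N2 hevapp (fun i hi => ih i hi)
        have hy := main N2 N1 (fun c => (hevapp c).symm) (fun i hi => (ih i hi).symm)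
        have hpow : (-1:ℤ) ^ (N2 + d + 1) = (-1:ℤ) ^ (N1 + d + 1) := by
          have hev2 : (-1:ℤ) ^ (N2 - N1) = 1 :=
            Even.neg_one_pow (by rw [Nat.even_iff]; omega)
          rw [show N2 + d + 1 = (N1 + d + 1) + (N2 - N1) by omega, pow_add, hev2, mul_one]
        rw [hpow] at hy
        rcases neg_one_pow_eq_or ℤ (N1 + d + 1) with h | h
        · rw [h] at hx hy; linarith
        · rw [h] at hx hy; linarith
    rcases hne.lt_or_gt with hlt | hlt
    · refine ⟨Na, Nb - Na, by omega, fun i hi => ?_⟩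
      have h := key Na Nb hlt heqf1 heqf2 (i - Na)
      rw [show Na + (i - Na) = i by omega, show Nb + (i - Na) = i + (Nb - Na) by omega] at h
      exact h.symm
    · refine ⟨Nb, Na - Nb, by omega, fun i hi => ?_⟩
      have h := key Nb Na hlt heqf1.symm heqf2.symm (i - Nb)
      rw [show Nb + (i - Nb) = i by omega, show Na + (i - Nb) = i + (Na - Nb) by omega] at h
      exact h.symm



def rho (m p k : ℕ) : ℕ := if k < m + p then k else m + (k - m) % p

lemma rho_lt {m p : ℕ} (hp : 0 < p) (k : ℕ) : rho m p k < m + p := by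
  unfold rho
  split
  · assumption
  · have := Nat.mod_lt (k - m) hp
    omega

lemma rho_decomp {m p : ℕ} (k : ℕ) : ∃ q : ℕ, k = rho m p k + q * p := by
  unfold rho
  split
  · exact ⟨0, by ring⟩
  · refine ⟨(k - m) / p, ?_⟩
    have h1 := Nat.div_add_mod (k - m) p
    have h2 : ¬ k < m + p := by assumption
    have h3 : p * ((k - m) / p) = ((k - m) / p) * p := Nat.mul_comm _ _
    omega

lemma per_add_mul {s : ℕ → ℤ} {m p : ℕ} (hper : ∀ i ≥ m, s (i + p) = s i) :
    ∀ q r, m ≤ r → s (r + q * p) = s r := by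
  intro q
  induction q with
  | zero => intro r _; simp
  | succ q ih =>
    intro r hr
    rw [show r + (q + 1) * p = (r + q * p) + p by ring, hper (r + q * p) (by omega), ih r hr]

lemma rho_shift {s : ℕ → ℤ} {m p : ℕ} (hper : ∀ i ≥ m, s (i + p) = s i)
    (k i : ℕ) : s (rho m p k + i) = s (k + i) := by
  obtain ⟨q, hq⟩ := rho_decomp (m := m) (p := p) k
  have hge : rho m p k = k ∨ m ≤ rho m p k := by
    unfold rho
    split
    · exact Or.inl rfl
    · exact Or.inr (by omega)
  rcases hge with h | h
  · rw [h]
  · conv_rhs => rw [hq]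
    rw [show rho m p k + q * p + i = (rho m p k + i) + q * p by ring]
    rw [per_add_mul hper q _ (by omega)]

lemma rho_parity {m p : ℕ} (hpe : 2 ∣ p) (k : ℕ) :
    (-1 : ℤ) ^ (rho m p k + 1) = (-1 : ℤ) ^ (k + 1) := by
  obtain ⟨q, hq⟩ := rho_decomp (m := m) (p := p) k
  obtain ⟨c, hc⟩ := hpe
  have he : Even (q * p) := ⟨q * c, by rw [hc]; ring⟩
  conv_rhs => rw [hq, show rho m p k + q * p + 1 = (rho m p k + 1) + q * p from by ring,
    pow_add, he.neg_one_pow, mul_one]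

lemma rho_succ {m p : ℕ} (hp : 0 < p) (k : ℕ) :
    rho m p (k + 1) = if rho m p k + 1 < m + p then rho m p k + 1 else m := by
  by_cases h2 : k < m + p
  · rw [show rho m p k = k from by rw [rho, if_pos h2]]
    by_cases h1 : k + 1 < m + p
    · rw [rho, if_pos h1, if_pos h1]
    · rw [rho, if_neg h1, if_neg h1, show k + 1 - m = p by omega, Nat.mod_self, Nat.add_zero]
  · rw [show rho m p k = m + (k - m) % p from by rw [rho, if_neg h2]]
    have hq := Nat.div_add_mod (k - m) p
    set r := (k - m) % p with hr
    have hrlt : r < p := Nat.mod_lt _ hp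
    rw [rho, if_neg (by omega)]
    by_cases h3 : r + 1 < p
    · rw [if_pos (by omega)]
      have h4 : k + 1 - m = p * ((k - m) / p) + (r + 1) := by omega
      rw [h4, Nat.mul_add_mod, Nat.mod_eq_of_lt h3]
      omega
    · rw [if_neg (by omega)]
      have h4 : k + 1 - m = p * ((k - m) / p) + p := by omega
      rw [h4, Nat.mul_add_mod, Nat.mod_self, Nat.add_zero]




def Match (s : ℕ → ℤ) (u : List ℤ) (k : ℕ) : Prop :=
  k ≤ u.length ∧ ∀ i < k, u.getD (u.length - k + i) 0 = s i

instance matchDec (s : ℕ → ℤ) (u : List ℤ) : DecidablePred (Match s u) := fun k => by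
  unfold Match; infer_instance

lemma match_zero (s : ℕ → ℤ) (u : List ℤ) : Match s u 0 :=
  ⟨Nat.zero_le _, fun i hi => absurd hi (Nat.not_lt_zero i)⟩

lemma adm_nil (s : ℕ → ℤ) : Adm s [] := by
  intro j k hjk
  simp at hjk

lemma match_snoc {s : ℕ → ℤ} {u : List ℤ} {b : ℤ} {k : ℕ} :
    Match s (u ++ [b]) (k + 1) ↔ Match s u k ∧ b = s k := by
  unfold Match
  rw [List.length_append, List.length_singleton]
  constructor
  · rintro ⟨hk1, hk2⟩
    refine ⟨⟨by omega, fun i hi => ?_⟩, ?_⟩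
    · have h := hk2 i (by omega)
      rw [show u.length + 1 - (k + 1) + i = u.length - k + i by omega] at h
      rw [← h]
      exact (List.getD_append _ _ _ _ (by omega)).symm
    · have h := hk2 k (by omega)
      rw [show u.length + 1 - (k + 1) + k = u.length by omega] at h
      rw [← h, List.getD_append_right _ _ _ _ (le_refl _)]
      simp
  · rintro ⟨⟨hk1, hk2⟩, hb⟩
    refine ⟨by omega, fun i hi => ?_⟩
    rcases Nat.lt_or_ge i k with h | h
    · rw [show u.length + 1 - (k + 1) + i = u.length - k + i by omega,
        List.getD_append _ _ _ _ (by omega)]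
      exact hk2 i h
    · have hik : i = k := by omega
      subst hik
      rw [show u.length + 1 - (i + 1) + i = u.length by omega,
        List.getD_append_right _ _ _ _ (le_refl _)]
      simpa using hb

lemma letters_snoc {A : Finset ℤ} {u : List ℤ} {b : ℤ} :
    (∀ i < (u ++ [b]).length, (u ++ [b]).getD i 0 ∈ A) ↔
      ((∀ i < u.length, u.getD i 0 ∈ A) ∧ b ∈ A) := by
  rw [List.length_append, List.length_singleton]
  constructor
  · intro h
    refine ⟨fun i hi => ?_, ?_⟩
    · have := h i (by omega)
      rwa [List.getD_append _ _ _ _ hi] at this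
    · have := h u.length (by omega)
      rwa [List.getD_append_right _ _ _ _ (le_refl _), Nat.sub_self] at this
      -- ([b]).getD 0 0 = b
  · rintro ⟨h1, h2⟩ i hi
    rcases Nat.lt_or_ge i u.length with h | h
    · rw [List.getD_append _ _ _ _ h]
      exact h1 i h
    · have : i = u.length := by omega
      subst this
      rw [List.getD_append_right _ _ _ _ (le_refl _), Nat.sub_self]
      simpa using h2

lemma adm_snoc {s : ℕ → ℤ} {u : List ℤ} {b : ℤ} :
    Adm s (u ++ [b]) ↔
      Adm s u ∧ ∀ k, Match s u k → 0 ≤ (-1 : ℤ) ^ (k + 1) * (b - s k) := by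
  constructor
  · intro h
    constructor
    · intro j k hjk hag
      have h2 := h j k (by rw [List.length_append, List.length_singleton]; omega)
        (fun i hi => by
          rw [List.getD_append _ _ _ _ (by omega)]
          exact hag i hi)
      rwa [List.getD_append _ _ _ _ hjk] at h2
    · rintro k ⟨hk1, hk2⟩
      have h2 := h (u.length - k) k (by rw [List.length_append, List.length_singleton]; omega)
        (fun i hi => by
          rw [List.getD_append _ _ _ _ (by omega)]
          exact hk2 i hi)
      rw [show u.length - k + k = u.length by omega,
        List.getD_append_right _ _ _ _ (le_refl _), Nat.sub_self] at h2
      simpa using h2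
  · rintro ⟨h1, h2⟩ j k hjk hag
    rw [List.length_append, List.length_singleton] at hjk
    rcases Nat.lt_or_ge (j + k) u.length with hlt | hge
    · rw [List.getD_append _ _ _ _ hlt]
      exact h1 j k hlt (fun i hi => by
        rw [← List.getD_append u [b] 0 (j + i) (by omega)]
        exact hag i hi)
    · have heq : j + k = u.length := by omega
      have hm : Match s u k := by
        refine ⟨by omega, fun i hi => ?_⟩
        have h3 := hag i hi
        rw [List.getD_append _ _ _ _ (by omega)] at h3
        rw [show u.length - k + i = j + i by omega]
        exact h3
      have h4 := h2 k hm
      rw [heq, List.getD_append_right _ _ _ _ (le_refl _), Nat.sub_self]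
      simpa using h4



lemma rho_succ' {m p : ℕ} (hp : 0 < p) (k : ℕ) :
    rho m p (rho m p k + 1) = rho m p (k + 1) := by
  rw [rho_succ hp k]
  have hx : rho m p k < m + p := rho_lt hp k
  by_cases h : rho m p k + 1 < m + p
  · rw [if_pos h, rho, if_pos h]
  · rw [if_neg h, rho, if_neg h, show rho m p k + 1 - m = p by omega, Nat.mod_self, Nat.add_zero]

lemma rho_shift0 {s : ℕ → ℤ} {m p : ℕ} (hper : ∀ i ≥ m, s (i + p) = s i) (k : ℕ) :
    s (rho m p k) = s k := by
  have h := rho_shift (s := s) hper k 0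
  simpa using h

/-- DFA transition. -/
def dstep (A : Finset ℤ) (s : ℕ → ℤ) (m p : ℕ) (hp : 0 < p)
    (o : Option (Finset (Fin (m + p)))) (b : ℤ) : Option (Finset (Fin (m + p))) :=
  o.bind (fun T =>
    if b ∈ A ∧ ∀ k ∈ T, 0 ≤ (-1 : ℤ) ^ ((k : ℕ) + 1) * (b - s (k : ℕ)) then
      some (((T.filter (fun k => b = s k.val)).image
          (fun k => (⟨rho m p (k.val + 1), rho_lt hp _⟩ : Fin (m + p)))) ∪
        (if b = s 0 then {(⟨rho m p 1, rho_lt hp 1⟩ : Fin (m + p))} else ∅))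
    else none)

def dfaM (A : Finset ℤ) (s : ℕ → ℤ) (m p : ℕ) (hp : 0 < p) :
    DFA ℤ (Option (Finset (Fin (m + p)))) where
  step := dstep A s m p hp
  start := some ∅
  accept := {o | o.isSome}

def Tset (s : ℕ → ℤ) (m p : ℕ) (hp : 0 < p) (u : List ℤ) : Finset (Fin (m + p)) :=
  ((Finset.Icc 1 u.length).filter (fun k => Match s u k)).image
    (fun k : ℕ => (⟨rho m p k, rho_lt hp k⟩ : Fin (m + p)))

lemma mem_Tset {s : ℕ → ℤ} {m p : ℕ} {hp : 0 < p} {u : List ℤ} {x : Fin (m + p)} :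
    x ∈ Tset s m p hp u ↔ ∃ k, 1 ≤ k ∧ Match s u k ∧ (x : ℕ) = rho m p k := by
  unfold Tset
  rw [Finset.mem_image]
  constructor
  · rintro ⟨k, hk, rfl⟩
    rw [Finset.mem_filter, Finset.mem_Icc] at hk
    exact ⟨k, hk.1.1, hk.2, rfl⟩
  · rintro ⟨k, h1, h2, h3⟩
    refine ⟨k, Finset.mem_filter.2 ⟨Finset.mem_Icc.2 ⟨h1, h2.1⟩, h2⟩, ?_⟩
    exact Fin.ext h3.symm

lemma cond_iff {A : Finset ℤ} (hA : A.Nonempty) {s : ℕ → ℤ} (hmax : s 0 = A.max' hA)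
    {m p : ℕ} (hp : 0 < p) (hpe : 2 ∣ p) (hper : ∀ i ≥ m, s (i + p) = s i)
    (u : List ℤ) (b : ℤ) :
    (b ∈ A ∧ ∀ k ∈ Tset s m p hp u, 0 ≤ (-1 : ℤ) ^ ((k : ℕ) + 1) * (b - s (k : ℕ))) ↔
      (b ∈ A ∧ ∀ k, Match s u k → 0 ≤ (-1 : ℤ) ^ (k + 1) * (b - s k)) := by
  constructor
  · rintro ⟨hb, h⟩
    refine ⟨hb, fun k hmk => ?_⟩
    rcases Nat.eq_zero_or_pos k with rfl | hk
    · have hble : b ≤ A.max' hA := A.le_max' b hb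
      rw [← hmax] at hble
      have he : (-1 : ℤ) ^ (0 + 1) * (b - s 0) = s 0 - b := by ring
      rw [he]
      omega
    · have hmem : (⟨rho m p k, rho_lt hp k⟩ : Fin (m + p)) ∈ Tset s m p hp u :=
        mem_Tset.2 ⟨k, hk, hmk, rfl⟩
      have h2 := h _ hmem
      simp only [Fin.val_mk] at h2
      rwa [rho_shift0 hper, rho_parity hpe] at h2
  · rintro ⟨hb, h⟩
    refine ⟨hb, fun x hx => ?_⟩
    obtain ⟨k, h1, h2, h3⟩ := mem_Tset.1 hx
    have h4 := h k h2
    rw [h3, rho_shift0 hper, rho_parity hpe]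
    exact h4

lemma Tset_snoc {s : ℕ → ℤ} {m p : ℕ} (hp : 0 < p)
    (hper : ∀ i ≥ m, s (i + p) = s i) (u : List ℤ) (b : ℤ) :
    Tset s m p hp (u ++ [b]) =
      (((Tset s m p hp u).filter (fun k => b = s k.val)).image
          (fun k => (⟨rho m p (k.val + 1), rho_lt hp _⟩ : Fin (m + p)))) ∪
        (if b = s 0 then {(⟨rho m p 1, rho_lt hp 1⟩ : Fin (m + p))} else ∅) := by
  ext x
  rw [mem_Tset, Finset.mem_union, Finset.mem_image]
  constructor
  · rintro ⟨k, hk1, hmk, hxk⟩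
    obtain ⟨k', rfl⟩ : ∃ k', k = k' + 1 := ⟨k - 1, by omega⟩
    rw [match_snoc] at hmk
    obtain ⟨hmk', hbk⟩ := hmk
    rcases Nat.eq_zero_or_pos k' with rfl | hk'
    · right
      rw [if_pos hbk, Finset.mem_singleton]
      exact Fin.ext hxk
    · left
      refine ⟨⟨rho m p k', rho_lt hp k'⟩, ?_, ?_⟩
      · rw [Finset.mem_filter]
        refine ⟨mem_Tset.2 ⟨k', hk', hmk', rfl⟩, ?_⟩
        show b = s (rho m p k')
        rw [rho_shift0 hper]
        exact hbk
      · refine Fin.ext ?_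
        show rho m p (rho m p k' + 1) = (x : ℕ)
        rw [rho_succ' hp, hxk]
  · rintro (⟨y, hy, hyx⟩ | hright)
    · rw [Finset.mem_filter] at hy
      obtain ⟨hyT, hby⟩ := hy
      obtain ⟨k, hk1, hmk, hyk⟩ := mem_Tset.1 hyT
      refine ⟨k + 1, by omega, ?_, ?_⟩
      · rw [match_snoc]
        refine ⟨hmk, ?_⟩
        rw [hby, hyk, rho_shift0 hper]
      · have hval : (x : ℕ) = rho m p ((y : ℕ) + 1) := (congrArg Fin.val hyx).symm
        rw [hval, hyk, rho_succ' hp]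
    · by_cases hb0 : b = s 0
      · rw [if_pos hb0, Finset.mem_singleton] at hright
        refine ⟨1, le_refl 1, ?_, ?_⟩
        · show Match s (u ++ [b]) (0 + 1)
          rw [match_snoc]
          exact ⟨match_zero s u, hb0⟩
        · rw [hright]
      · rw [if_neg hb0] at hright
        exact absurd hright (Finset.notMem_empty x)

open Classical in
lemma eval_inv {A : Finset ℤ} (hA : A.Nonempty) {s : ℕ → ℤ} (hmax : s 0 = A.max' hA)
    {m p : ℕ} (hp : 0 < p) (hpe : 2 ∣ p) (hper : ∀ i ≥ m, s (i + p) = s i)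
    (u : List ℤ) :
    (dfaM A s m p hp).eval u =
      if (∀ i < u.length, u.getD i 0 ∈ A) ∧ Adm s u then some (Tset s m p hp u) else none := by
  induction u using List.reverseRecOn with
  | nil =>
    rw [if_pos ⟨by simp, adm_nil s⟩]
    show some ∅ = some (Tset s m p hp [])
    congr 1
  | append_singleton u b ih =>
    rw [DFA.eval_append_singleton, ih]
    by_cases hu : (∀ i < u.length, u.getD i 0 ∈ A) ∧ Adm s u
    · rw [if_pos hu]
      show dstep A s m p hp (some (Tset s m p hp u)) b = _
      unfold dstep
      rw [Option.bind_some]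
      by_cases hc : b ∈ A ∧ ∀ k ∈ Tset s m p hp u, 0 ≤ (-1 : ℤ) ^ ((k : ℕ) + 1) * (b - s (k : ℕ))
      · rw [if_pos hc]
        have hc2 := (cond_iff hA hmax hp hpe hper u b).1 hc
        have hgood : (∀ i < (u ++ [b]).length, (u ++ [b]).getD i 0 ∈ A) ∧ Adm s (u ++ [b]) := by
          constructor
          · rw [letters_snoc]
            exact ⟨hu.1, hc2.1⟩
          · rw [adm_snoc]
            exact ⟨hu.2, hc2.2⟩
        rw [if_pos hgood]
        congr 1
        exact (Tset_snoc hp hper u b).symm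
      · rw [if_neg hc]
        have hbad : ¬ ((∀ i < (u ++ [b]).length, (u ++ [b]).getD i 0 ∈ A) ∧ Adm s (u ++ [b])) := by
          intro hgood
          apply hc
          rw [cond_iff hA hmax hp hpe hper u b]
          constructor
          · exact (letters_snoc.1 hgood.1).2
          · exact (adm_snoc.1 hgood.2).2
        rw [if_neg hbad]
    · rw [if_neg hu]
      show dstep A s m p hp none b = _
      have hbad : ¬ ((∀ i < (u ++ [b]).length, (u ++ [b]).getD i 0 ∈ A) ∧ Adm s (u ++ [b])) := by
        intro hgood
        exact hu ⟨(letters_snoc.1 hgood.1).1, (adm_snoc.1 hgood.2).1⟩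
      rw [if_neg hbad]
      rfl


open Classical in
lemma regular {A : Finset ℤ} (hA : A.Nonempty) {s : ℕ → ℤ}
    (hsA : ∀ i, s i ∈ A) (hmax : s 0 = A.max' hA)
    (hasmin : ∀ n : ℕ, AltLe s (fun i => s (n + i)))
    (m p : ℕ) (hp : 0 < p) (hpe : 2 ∣ p) (hper : ∀ i ≥ m, s (i + p) = s i) :
    (factorLang (Ss A s)).IsRegular := by
  refine ⟨Option (Finset (Fin (m + p))), inferInstance, dfaM A s m p hp, ?_⟩
  ext u
  rw [DFA.mem_accepts]
  have hinv := eval_inv hA hmax hp hpe hper u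
  constructor
  · intro hacc
    rw [factor_iff hA hsA hmax hasmin]
    by_contra hn
    rw [hinv, if_neg hn] at hacc
    simpa [dfaM] using hacc
  · intro hu
    show (dfaM A s m p hp).eval u ∈ (dfaM A s m p hp).accept
    rw [hinv, if_pos ((factor_iff hA hsA hmax hasmin u).1 hu)]
    simp [dfaM]

end SoficAux

/-- Let `s` be an alternately shift minimal word over a finite alphabet `A` of integers.
The subshift `S(s)` is sofic (its language of factors is regular) if and only if `s` is
eventually periodic. -/
theorem sofic_iff_eventually_periodic (A : Finset ℤ) (hA : A.Nonempty)
    (s : ℕ → ℤ) (hsA : ∀ i, s i ∈ A) (hmax : s 0 = A.max' hA)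
    (hasmin : ∀ n : ℕ, AltLe s (fun i => s (n + i))) :
    (factorLang (Ss A s)).IsRegular ↔
      ∃ m p : ℕ, 0 < p ∧ ∀ i ≥ m, s (i + p) = s i := by
  constructor
  · exact fun h => SoficAux.per_of_regular hA hsA hmax hasmin h
  · rintro ⟨m, p, hp, hper⟩
    have hper2 : ∀ i ≥ m, s (i + 2 * p) = s i := by
      intro i hi
      rw [show i + 2 * p = (i + p) + p by ring, hper (i + p) (by omega), hper i hi]
    exact SoficAux.regular hA hsA hmax hasmin m (2 * p) (by omega) ⟨p, rfl⟩ hper2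
end

section
/- Let β > 1 be a real number and let x, y ∈ I_{−β}. Then x < y if and only if d_{−β}(x) ≺_alt d_{−β}(y). -/
/-- The (-β)-transformation `T_{-β}(x) = -βx - ⌊-βx + β/(β+1)⌋`. -/
noncomputable def negBetaT (β : ℝ) (x : ℝ) : ℝ :=
  -β * x - ⌊-β * x + β / (β + 1)⌋

/-- The digits of the (-β)-expansion: `negBetaDigit β x n` is the digit
`x_{n+1} = ⌊-β T_{-β}^n(x) + β/(β+1)⌋`. -/
noncomputable def negBetaDigit (β : ℝ) (x : ℝ) (n : ℕ) : ℤ :=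
  ⌊-β * (negBetaT β)^[n] x + β / (β + 1)⌋

lemma altLt_irrefl (u : ℕ → ℤ) : ¬ AltLt u u := by
  rintro ⟨k, -, h⟩
  simp at h

lemma altLt_asymm {u v : ℕ → ℤ} (h1 : AltLt u v) (h2 : AltLt v u) : False := by
  obtain ⟨k1, e1, l1⟩ := h1
  obtain ⟨k2, e2, l2⟩ := h2
  rcases lt_trichotomy k1 k2 with h | h | h
  · rw [e2 k1 h] at l1; simp at l1
  · subst h
    have : (-1 : ℤ) ^ (k1 + 1) * (u k1 - v k1) + (-1 : ℤ) ^ (k1 + 1) * (v k1 - u k1) = 0 := by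
      ring
    linarith
  · rw [e1 k2 h] at l2; simp at l2

lemma negBetaT_mem {β : ℝ} (hβ : 1 < β) (x : ℝ) :
    negBetaT β x ∈ Set.Ico (-β / (β + 1)) (1 / (β + 1)) := by
  have h1 : (0:ℝ) < β + 1 := by linarith
  have hf := Int.fract_nonneg (-β * x + β / (β + 1))
  have hf2 := Int.fract_lt_one (-β * x + β / (β + 1))
  have he : negBetaT β x = Int.fract (-β * x + β / (β + 1)) - β / (β + 1) := by
    rw [Int.fract]; unfold negBetaT; ring
  have hc : β / (β + 1) + 1 / (β + 1) = 1 := by field_simp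
  rw [he]
  constructor
  · rw [neg_div]; linarith
  · linarith

lemma negBetaT_iter_mem {β : ℝ} (hβ : 1 < β) {x : ℝ}
    (hx : x ∈ Set.Ico (-β / (β + 1)) (1 / (β + 1))) (n : ℕ) :
    (negBetaT β)^[n] x ∈ Set.Ico (-β / (β + 1)) (1 / (β + 1)) := by
  cases n with
  | zero => exact hx
  | succ n => rw [Function.iterate_succ_apply']; exact negBetaT_mem hβ _

lemma negBetaT_iter_sub {β : ℝ} (x y : ℝ) (n : ℕ)
    (h : ∀ i < n, negBetaDigit β x i = negBetaDigit β y i) :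
    (negBetaT β)^[n] x - (negBetaT β)^[n] y = (-β) ^ n * (x - y) := by
  induction n with
  | zero => simp
  | succ n ih =>
    have hd := h n (Nat.lt_succ_self n)
    have ih' := ih (fun i hi => h i (hi.trans (Nat.lt_succ_self n)))
    rw [Function.iterate_succ_apply', Function.iterate_succ_apply', negBetaT, negBetaT]
    unfold negBetaDigit at hd
    rw [hd, pow_succ]
    push_cast
    linear_combination (-β) * ih'

lemma altLt_of_lt {β : ℝ} (hβ : 1 < β) {x y : ℝ}
    (hx : x ∈ Set.Ico (-β / (β + 1)) (1 / (β + 1)))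
    (hy : y ∈ Set.Ico (-β / (β + 1)) (1 / (β + 1)))
    (hxy : x < y) : AltLt (negBetaDigit β x) (negBetaDigit β y) := by
  have h1 : (0:ℝ) < β + 1 := by linarith
  have hc : β / (β + 1) + 1 / (β + 1) = 1 := by field_simp
  -- there is a digit where they differ
  have hex : ∃ n, negBetaDigit β x n ≠ negBetaDigit β y n := by
    by_contra hall
    push_neg at hall
    obtain ⟨n, hn⟩ := pow_unbounded_of_one_lt (1 / (y - x)) hβ
    have hsub := negBetaT_iter_sub (β := β) x y n (fun i _ => hall i)
    have hxm := negBetaT_iter_mem hβ hx n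
    have hym := negBetaT_iter_mem hβ hy n
    have habs : |(negBetaT β)^[n] x - (negBetaT β)^[n] y| < 1 := by
      rw [abs_lt]
      rcases hxm with ⟨hx1, hx2⟩
      rcases hym with ⟨hy1, hy2⟩
      rw [neg_div] at hx1 hy1
      constructor <;> linarith
    rw [hsub, abs_mul, abs_pow, abs_neg, abs_of_pos (by linarith : (0:ℝ) < β),
      abs_of_neg (by linarith : x - y < 0)] at habs
    have hyx : 0 < y - x := by linarith
    have : 1 < β ^ n * (y - x) := by
      rw [div_lt_iff₀ hyx] at hn
      linarith
    rw [neg_sub] at habs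
    linarith
  classical
  let k := Nat.find hex
  have hk : negBetaDigit β x k ≠ negBetaDigit β y k := Nat.find_spec hex
  have hmin : ∀ i < k, negBetaDigit β x i = negBetaDigit β y i := fun i hi => by
    have := Nat.find_min hex hi
    simpa using this
  refine ⟨k, hmin, ?_⟩
  have hsub := negBetaT_iter_sub (β := β) x y k hmin
  have hAB : (-β * (negBetaT β)^[k] x + β / (β + 1)) - (-β * (negBetaT β)^[k] y + β / (β + 1))
      = (-β) ^ (k + 1) * (x - y) := by
    rw [pow_succ]
    linear_combination (-β) * hsub
  have hbp : (0:ℝ) < β ^ (k + 1) := pow_pos (by linarith) _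
  unfold negBetaDigit
  rcases Nat.even_or_odd (k + 1) with he | ho
  · -- (-1)^(k+1) = 1, and A - B < 0 so floor A < floor B
    have hs : (-β) ^ (k + 1) = β ^ (k + 1) := by
      rw [neg_pow, he.neg_one_pow, one_mul]
    have hAltB : -β * (negBetaT β)^[k] x + β / (β + 1) < -β * (negBetaT β)^[k] y + β / (β + 1) := by
      nlinarith [hAB, hs]
    have hfl : ⌊-β * (negBetaT β)^[k] x + β / (β + 1)⌋ ≤ ⌊-β * (negBetaT β)^[k] y + β / (β + 1)⌋ :=
      Int.floor_le_floor hAltB.le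
    have hne : ⌊-β * (negBetaT β)^[k] x + β / (β + 1)⌋ ≠ ⌊-β * (negBetaT β)^[k] y + β / (β + 1)⌋ := hk
    rw [he.neg_one_pow, one_mul]
    omega
  · have hs : (-β) ^ (k + 1) = -β ^ (k + 1) := by
      rw [neg_pow, ho.neg_one_pow, neg_one_mul]
    have hBltA : -β * (negBetaT β)^[k] y + β / (β + 1) < -β * (negBetaT β)^[k] x + β / (β + 1) := by
      nlinarith [hAB, hs]
    have hfl : ⌊-β * (negBetaT β)^[k] y + β / (β + 1)⌋ ≤ ⌊-β * (negBetaT β)^[k] x + β / (β + 1)⌋ :=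
      Int.floor_le_floor hBltA.le
    have hne : ⌊-β * (negBetaT β)^[k] x + β / (β + 1)⌋ ≠ ⌊-β * (negBetaT β)^[k] y + β / (β + 1)⌋ := hk
    rw [ho.neg_one_pow, neg_one_mul]
    omega

/-- For `x, y` in `I_{-β} = [-β/(β+1), 1/(β+1))`, one has `x < y` iff
`d_{-β}(x) ≺_alt d_{-β}(y)`. -/
theorem lt_iff_altLt_negBetaExpansion (β : ℝ) (hβ : 1 < β) (x y : ℝ)
    (hx : x ∈ Set.Ico (-β / (β + 1)) (1 / (β + 1)))
    (hy : y ∈ Set.Ico (-β / (β + 1)) (1 / (β + 1))) :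
    x < y ↔ AltLt (negBetaDigit β x) (negBetaDigit β y) := by
  constructor
  · exact altLt_of_lt hβ hx hy
  · intro h
    rcases lt_trichotomy x y with h' | h' | h'
    · exact h'
    · subst h'; exact absurd h (altLt_irrefl _)
    · exact absurd (altLt_of_lt hβ hy hx h') (fun h2 => altLt_asymm h h2)
end

section
/- Let β > 1 be a real number and let d = d_{−β}(−β/(β+1)). If d is not purely periodic with odd period, then {w = (w_i)_{i∈ℤ} ∈ A_{−β}^ℤ : for all n, d ⪯_alt w_n w_{n+1}⋯} = {w = (w_i)_{i∈ℤ} ∈ A_{−β}^ℤ : for all n, d ⪯_alt w_n w_{n+1}⋯ ⪯_alt 0d}; that is, the lower admissibility condition alone already implies the upper condition with bound 0d. -/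
/-- Prepend the digit `0` to an infinite word. -/
def zeroCons (d : ℕ → ℤ) : ℕ → ℤ := fun n => if n = 0 then 0 else d (n - 1)

/-- Let `d = d_{-β}(-β/(β+1))`. If `d` is not purely periodic with odd period, then the
bi-infinite words over `A_{-β}` satisfying the lower admissibility condition
`∀ n, d ⪯_alt w_n w_{n+1}⋯` automatically satisfy the upper condition with bound `0d`. -/
theorem lower_condition_implies_upper (β : ℝ) (hβ : 1 < β)
    (d : ℕ → ℤ) (hd : d = negBetaDigit β (-β / (β + 1)))
    (hper : ¬ ∃ p : ℕ, 0 < p ∧ Odd p ∧ ∀ i, d (i + p) = d i) :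
    {w : ℤ → ℤ | (∀ i, 0 ≤ w i ∧ w i ≤ ⌊β⌋) ∧ ∀ n : ℤ, AltLe d (shiftSeq w n)} =
      {w : ℤ → ℤ | (∀ i, 0 ≤ w i ∧ w i ≤ ⌊β⌋) ∧
        ∀ n : ℤ, AltLe d (shiftSeq w n) ∧ AltLe (shiftSeq w n) (zeroCons d)} := by
  ext w
  simp only [Set.mem_setOf_eq]
  constructor
  · rintro ⟨hbd, hlo⟩
    refine ⟨hbd, fun n => ⟨hlo n, ?_⟩⟩
    rcases (hbd (n + 0)).1.lt_or_eq with hpos | hzero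
    · -- w n > 0 : strict at position 0
      right
      refine ⟨0, fun i hi => absurd hi (Nat.not_lt_zero i), ?_⟩
      have h0 : shiftSeq w n 0 = w n := by simp [shiftSeq]
      have h1 : zeroCons d 0 = 0 := rfl
      rw [h0, h1, pow_one]
      simp only [add_zero] at hpos
      omega
    · -- w n = 0 : use the lower condition at n + 1
      have htail : (fun i => shiftSeq w n (i + 1)) = shiftSeq w (n + 1) := by
        funext i
        simp only [shiftSeq]
        congr 1
        push_cast
        ring
      rcases hlo (n + 1) with heq | hlt
      · left
        funext m
        cases m with
        | zero => simpa [shiftSeq, zeroCons] using hzero.symm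
        | succ j =>
          have := congrFun htail j
          simp only [zeroCons, Nat.succ_ne_zero, if_false, Nat.succ_sub_one]
          rw [← heq] at this
          exact this
      · right
        obtain ⟨k, hk1, hk2⟩ := hlt
        refine ⟨k + 1, ?_, ?_⟩
        · intro i hi
          cases i with
          | zero => simpa [shiftSeq, zeroCons] using hzero.symm
          | succ j =>
            have hj : j < k := by omega
            have := congrFun htail j
            simp only [zeroCons, Nat.succ_ne_zero, if_false, Nat.succ_sub_one]
            rw [← hk1 j hj] at this
            exact this
        · have h1 : shiftSeq w n (k + 1) = shiftSeq w (n + 1) k := congrFun htail k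
          have h2 : zeroCons d (k + 1) = d k := by
            simp [zeroCons]
          rw [h1, h2]
          have : (-1 : ℤ) ^ (k + 1 + 1) = -(-1 : ℤ) ^ (k + 1) := by ring
          rw [this]
          nlinarith [hk2]
  · rintro ⟨hbd, h⟩
    exact ⟨hbd, fun n => (h n).1⟩
end

section
/- If β is a Pisot number, then every element x of ℚ(β) ∩ I_{−β} has an eventually periodic (−β)-expansion d_{−β}(x). -/
/-- A Pisot number: an algebraic integer `β > 1` all of whose other complex conjugates
have modulus strictly less than `1`. -/
def IsPisot (β : ℝ) : Prop :=
  1 < β ∧ IsIntegral ℤ β ∧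
    ∀ z : ℂ, Polynomial.aeval z (minpoly ℤ β) = 0 → z ≠ (β : ℂ) → ‖z‖ < 1

open IntermediateField NumberField

/-!
The orbit `T_{-β}^n(x)` stays in the number field `K = ℚ(β)` and satisfies
`T^{n+1}(x) = -β T^n(x) - x_{n+1}` with bounded integer digits. Under the identity embedding
of `K` the orbit lies in `I_{-β} ⊆ [-1, 1]`; under every other complex embedding the image of
`-β` has modulus `< 1` because `β` is Pisot, so the recurrence contracts and the images stay
bounded. A fixed integer multiple of every `T^n(x)` is an algebraic integer, and there are
only finitely many algebraic integers of `K` with bounded conjugates, so the orbit is finite,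
hence eventually periodic, and so are the digits.
-/

theorem Function.exists_iterate_add_eq_of_finite_range {α : Type*} {f : α → α} {x : α}
    (h : (Set.range fun n => f^[n] x).Finite) :
    ∃ m p : ℕ, 0 < p ∧ ∀ n ≥ m, f^[n + p] x = f^[n] x := by
  obtain ⟨a, b, hab, heq⟩ :=
    h.exists_lt_map_eq_of_forall_mem (Set.mem_range_self (f := fun n => f^[n] x))
  refine ⟨a, b - a, Nat.sub_pos_of_lt hab, fun n hn => ?_⟩
  obtain ⟨k, rfl⟩ := Nat.exists_eq_add_of_le hn
  rw [show a + k + (b - a) = k + b by omega, iterate_add_apply, ← heq, ← iterate_add_apply,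
    add_comm]

theorem exists_norm_le_of_contracting_recurrence {R : Type*} [SeminormedRing R] {c : R}
    (hc : ‖c‖ < 1) {w e : ℕ → R} {D : ℝ} (he : ∀ n, ‖e n‖ ≤ D)
    (hw : ∀ n, w (n + 1) = c * w n + e n) : ∃ C, ∀ n, ‖w n‖ ≤ C := by
  set M := max ‖w 0‖ (D / (1 - ‖c‖))
  have hDM : D ≤ (1 - ‖c‖) * M := by
    rw [← div_le_iff₀' (by linarith)]
    exact le_max_right _ _
  refine ⟨M, fun n => ?_⟩
  induction n with
  | zero => exact le_max_left _ _
  | succ n ih =>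
    calc ‖w (n + 1)‖ ≤ ‖c‖ * ‖w n‖ + D := by
          rw [hw]
          exact (norm_add_le _ _).trans (add_le_add (norm_mul_le _ _) (he n))
      _ ≤ ‖c‖ * M + D := by gcongr
      _ ≤ M := by linarith

theorem isIntegral_mul_of_recurrence {A : Type*} [CommRing A] {b : A} (hb : IsIntegral ℤ b)
    {y : ℕ → A} {d : ℕ → ℤ} (hy : ∀ n, y (n + 1) = b * y n + d n) {N : ℤ}
    (h0 : IsIntegral ℤ (N * y 0)) (n : ℕ) : IsIntegral ℤ (N * y n) := by
  induction n with
  | zero => exact h0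
  | succ n ih =>
    rw [hy, mul_add, mul_left_comm, ← Int.cast_mul]
    exact (hb.mul ih).add (isIntegral_intCast _)

namespace NumberField

variable {K : Type*} [Field K] [NumberField K]

theorem finite_of_isIntegral_mul_of_norm_le {N : ℤ} (hN : N ≠ 0) (B : ℝ) :
    {z : K | IsIntegral ℤ (N * z) ∧ ∀ φ : K →+* ℂ, ‖φ z‖ ≤ B}.Finite := by
  refine ((Embeddings.finite_of_norm_le K ℂ (|(N : ℝ)| * B)).preimage
    (mul_right_injective₀ (Int.cast_ne_zero.2 hN)).injOn).subset ?_
  rintro z ⟨hz, hφ⟩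
  refine ⟨hz, fun φ => ?_⟩
  rw [map_mul, map_intCast, norm_mul, Complex.norm_intCast]
  exact mul_le_mul_of_nonneg_left (hφ φ) (abs_nonneg _)

theorem finite_range_of_recurrence {b : K} (hb : IsIntegral ℤ b) {y : ℕ → K} {d : ℕ → ℤ}
    {D : ℝ} (hd : ∀ n, |(d n : ℝ)| ≤ D) (hy : ∀ n, y (n + 1) = b * y n + d n)
    (hbdd : ∀ φ : K →+* ℂ, ‖φ b‖ < 1 ∨ ∃ C, ∀ n, ‖φ (y n)‖ ≤ C) :
    (Set.range y).Finite := by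
  have hy0 : IsAlgebraic ℤ (y 0) :=
    (IsFractionRing.isAlgebraic_iff ℤ ℚ K).2 (Algebra.IsAlgebraic.isAlgebraic (y 0))
  obtain ⟨N, hN, hNy⟩ := hy0.exists_integral_multiple
  rw [zsmul_eq_mul] at hNy
  have hC : ∀ φ : K →+* ℂ, ∃ C, ∀ n, ‖φ (y n)‖ ≤ C := fun φ =>
    (hbdd φ).elim (fun hc => exists_norm_le_of_contracting_recurrence hc
      (fun n => (Complex.norm_intCast (d n)).trans_le (hd n))
      (fun n => by rw [hy, map_add, map_mul, map_intCast])) id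
  choose C hC using hC
  obtain ⟨B, hB⟩ := Finite.bddAbove_range C
  refine (finite_of_isIntegral_mul_of_norm_le hN B).subset (Set.range_subset_iff.2 fun n => ?_)
  exact ⟨isIntegral_mul_of_recurrence hb hy hNy n, fun φ => (hC φ n).trans (hB ⟨φ, rfl⟩)⟩

end NumberField

theorem IntermediateField.adjoin_simple_ringHom_ext {E M : Type*} [Field E] [CharZero E]
    [Ring M] [Algebra ℚ M] {α : E} {φ ψ : ℚ⟮α⟯ →+* M}
    (h : φ (AdjoinSimple.gen ℚ α) = ψ (AdjoinSimple.gen ℚ α)) : φ = ψ := by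
  have : φ.toRatAlgHom = ψ.toRatAlgHom := by
    refine adjoin_algHom_ext ℚ ?_
    rintro _ rfl
    exact h
  exact RingHom.ext fun z => AlgHom.congr_fun this z

theorem IsPisot.norm_lt_one_of_ne {β : ℝ} (hβ : IsPisot β) {K : Type*} [Field K]
    [Algebra K ℝ] {b : K} (hb : algebraMap K ℝ b = β) (φ : K →+* ℂ) (hφ : φ b ≠ β) :
    ‖φ b‖ < 1 := by
  refine hβ.2.2 _ ?_ hφ
  rw [← hb, minpoly.algebraMap_eq (algebraMap K ℝ).injective]
  exact (Polynomial.aeval_algHom_apply φ.toIntAlgHom b _).trans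
    (by rw [minpoly.aeval, map_zero])

section NegBeta

variable {β x : ℝ}

theorem negBetaT_mem_Ico (hβ : 0 < β + 1) (z : ℝ) :
    negBetaT β z ∈ Set.Ico (-β / (β + 1)) (1 / (β + 1)) := by
  have heq : negBetaT β z = Int.fract (-β * z + β / (β + 1)) - β / (β + 1) := by
    rw [Int.fract, negBetaT]; ring
  have hsum : β / (β + 1) + 1 / (β + 1) = 1 := by field_simp
  rw [heq, neg_div]
  constructor <;> linarith [Int.fract_nonneg (-β * z + β / (β + 1)),
    Int.fract_lt_one (-β * z + β / (β + 1))]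

theorem abs_le_one_of_mem_Ico (hβ : 0 ≤ β) {z : ℝ}
    (hz : z ∈ Set.Ico (-β / (β + 1)) (1 / (β + 1))) : |z| ≤ 1 := by
  have h1 : (0 : ℝ) < β + 1 := by linarith
  have h2 : β / (β + 1) ≤ 1 := by rw [div_le_one h1]; linarith
  have h3 : 1 / (β + 1) ≤ 1 := by rw [div_le_one h1]; linarith
  rw [neg_div] at hz
  exact abs_le.2 ⟨by linarith [hz.1], by linarith [hz.2]⟩

theorem abs_iterate_negBetaT_le_one (hβ : 0 ≤ β)
    (hx : x ∈ Set.Ico (-β / (β + 1)) (1 / (β + 1))) (n : ℕ) :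
    |(negBetaT β)^[n] x| ≤ 1 := by
  cases n with
  | zero => exact abs_le_one_of_mem_Ico hβ hx
  | succ n =>
    rw [Function.iterate_succ_apply']
    exact abs_le_one_of_mem_Ico hβ (negBetaT_mem_Ico (by linarith) _)

theorem iterate_succ_negBetaT (β x : ℝ) (n : ℕ) :
    (negBetaT β)^[n + 1] x = -β * (negBetaT β)^[n] x - negBetaDigit β x n := by
  rw [Function.iterate_succ_apply']
  rfl

theorem abs_negBetaDigit_le (hβ : 0 ≤ β) (hx : x ∈ Set.Ico (-β / (β + 1)) (1 / (β + 1)))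
    (n : ℕ) : |(negBetaDigit β x n : ℝ)| ≤ β + 1 := by
  set T := negBetaT β
  have hdigit : (negBetaDigit β x n : ℝ) = -β * T^[n] x - T^[n + 1] x := by
    rw [iterate_succ_negBetaT]
    ring
  calc |(negBetaDigit β x n : ℝ)| ≤ |-β * T^[n] x| + |T^[n + 1] x| := by
        rw [hdigit]
        exact abs_sub _ _
    _ = β * |T^[n] x| + |T^[n + 1] x| := by rw [abs_mul, abs_neg, abs_of_nonneg hβ]
    _ ≤ β * 1 + 1 := by gcongr <;> exact abs_iterate_negBetaT_le_one hβ hx _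
    _ = β + 1 := by ring

theorem iterate_negBetaT_mem {S : Type*} [SetLike S ℝ] [SubringClass S ℝ] {s : S}
    (hβ : β ∈ s) (hx : x ∈ s) (n : ℕ) : (negBetaT β)^[n] x ∈ s := by
  induction n with
  | zero => exact hx
  | succ n ih =>
    rw [iterate_succ_negBetaT]
    exact sub_mem (mul_mem (neg_mem hβ) ih) (intCast_mem s _)

end NegBeta

/-- If `β` is a Pisot number, then every `x ∈ ℚ(β) ∩ I_{-β}` has an eventually periodic
(-β)-expansion. -/
theorem eventually_periodic_negBetaExpansion_of_pisot (β : ℝ) (hβ : IsPisot β)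
    (x : ℝ) (hxQ : x ∈ Algebra.adjoin ℚ ({β} : Set ℝ))
    (hxI : x ∈ Set.Ico (-β / (β + 1)) (1 / (β + 1))) :
    ∃ m p : ℕ, 0 < p ∧ ∀ n ≥ m, negBetaDigit β x (n + p) = negBetaDigit β x n := by
  have hβ0 : 0 ≤ β := by linarith [hβ.1]
  have : FiniteDimensional ℚ ℚ⟮β⟯ := adjoin.finiteDimensional hβ.2.1.tower_top
  have : NumberField ℚ⟮β⟯ := ⟨⟩
  set b := AdjoinSimple.gen ℚ β
  have hb : IsIntegral ℤ b :=
    (isIntegral_algebraMap_iff (algebraMap ℚ⟮β⟯ ℝ).injective).1 hβ.2.1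
  let y : ℕ → ℚ⟮β⟯ := fun n => ⟨(negBetaT β)^[n] x,
    iterate_negBetaT_mem (mem_adjoin_simple_self ℚ β) (algebra_adjoin_le_adjoin ℚ _ hxQ) n⟩
  have hy : ∀ n, y (n + 1) = -b * y n + ((-negBetaDigit β x n : ℤ) : ℚ⟮β⟯) := fun n =>
    Subtype.ext <| (iterate_succ_negBetaT β x n).trans (by push_cast; rfl)
  have hbdd (φ : ℚ⟮β⟯ →+* ℂ) : ‖φ (-b)‖ < 1 ∨ ∃ C, ∀ n, ‖φ (y n)‖ ≤ C := by
    by_cases hφ : φ b = β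
    · have hφ_real : φ = Complex.ofRealHom.comp (algebraMap ℚ⟮β⟯ ℝ) :=
        adjoin_simple_ringHom_ext hφ
      refine Or.inr ⟨1, fun n => ?_⟩
      simpa [hφ_real] using abs_iterate_negBetaT_le_one hβ0 hxI n
    · rw [map_neg, norm_neg]
      exact Or.inl (hβ.norm_lt_one_of_ne rfl φ hφ)
  have hfin := NumberField.finite_range_of_recurrence hb.neg
    (fun n => by simpa using abs_negBetaDigit_le hβ0 hxI n) hy hbdd
  obtain ⟨m, p, hp, hper⟩ := Function.exists_iterate_add_eq_of_finite_range
    (f := negBetaT β) (x := x) (Set.range_comp Subtype.val y ▸ hfin.image Subtype.val)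
  exact ⟨m, p, hp, fun n hn => by rw [negBetaDigit, negBetaDigit, hper n hn]⟩
end

section
/- Let β be a Pisot number and let c ≥ ⌊β⌋ be an integer. Let Z_{−β}(2c) = {(z_i)_{i≥0} ∈ {−2c, …, 2c}^ℕ : Σ_{i≥0} z_i(−β)^{−i} = 0}. Then the set of all partial-sum values { Σ_{i=0}^{n} z_i(−β)^{n−i} : n ∈ ℕ, (z_i)_{i≥0} ∈ Z_{−β}(2c) } is finite. -/
/-- `z` is a sequence over `{-2c, …, 2c}` representing `0` in base `-β`. -/
def MemZset (β : ℝ) (c : ℤ) (z : ℕ → ℤ) : Prop :=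
  (∀ i, -(2 * c) ≤ z i ∧ z i ≤ 2 * c) ∧ (∑' i : ℕ, (z i : ℝ) * ((-β)⁻¹) ^ i) = 0

/-!
The state `x = Σ_{i ≤ n} z_i (-β)^{n-i}` is the value at `β` of an integer polynomial, hence an
algebraic integer of `ℚ(β)`, and its conjugates are the values of the same polynomial at the
conjugates `γ` of `β`. At `γ = β`, the vanishing of the full series makes `x` equal to minus the
rescaled tail, so `|x| ≤ 2c / (β - 1)`; at every other `γ` we have `|γ| < 1`, and the sum is
dominated by a geometric series, giving `2c / (1 - |γ|)`. Algebraic integers of a number field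
with all conjugates bounded are finitely many.
-/

open Finset Polynomial IntermediateField

theorem norm_sum_mul_pow_sub_le_of_norm_lt_one {𝕜 : Type*} [NormedDivisionRing 𝕜] {w : 𝕜}
    (hw : ‖w‖ < 1) {a : ℕ → 𝕜} {M : ℝ} (ha : ∀ i, ‖a i‖ ≤ M) (n : ℕ) :
    ‖∑ i ∈ range (n + 1), a i * w ^ (n - i)‖ ≤ M / (1 - ‖w‖) := by
  have hM : 0 ≤ M := (norm_nonneg _).trans (ha 0)
  calc ‖∑ i ∈ range (n + 1), a i * w ^ (n - i)‖
      ≤ ∑ i ∈ range (n + 1), M * ‖w‖ ^ (n - i) := by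
        refine (norm_sum_le _ _).trans (sum_le_sum fun i _ => ?_)
        rw [norm_mul, norm_pow]
        exact mul_le_mul_of_nonneg_right (ha i) (by positivity)
    _ = M * ∑ k ∈ range (n + 1), ‖w‖ ^ k := by
        rw [← mul_sum, ← sum_range_reflect (fun k => ‖w‖ ^ k)]
        simp
    _ ≤ M / (1 - ‖w‖) := by
        rw [range_eq_Ico, ← mul_one_div]
        gcongr
        simpa using geom_sum_Ico_le_of_lt_one (m := 0) (n := n + 1) (norm_nonneg w) hw

theorem norm_sum_mul_pow_sub_le_of_tsum_eq_zero {𝕜 : Type*} [NormedField 𝕜] [CompleteSpace 𝕜]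
    {x : 𝕜} (hx : 1 < ‖x‖) {a : ℕ → 𝕜} {M : ℝ} (ha : ∀ i, ‖a i‖ ≤ M)
    (hsum : ∑' i, a i * x⁻¹ ^ i = 0) (n : ℕ) :
    ‖∑ i ∈ range (n + 1), a i * x ^ (n - i)‖ ≤ M / (‖x‖ - 1) := by
  have hx0 : x ≠ 0 := norm_pos_iff.1 (one_pos.trans hx)
  set r := ‖x⁻¹‖ with hr
  have hr0 : 0 ≤ r := norm_nonneg _
  have hr1 : r < 1 := by rw [hr, norm_inv]; exact inv_lt_one_of_one_lt₀ hx
  have hsummable : Summable fun i => a i * x⁻¹ ^ i :=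
    ((summable_geometric_of_lt_one hr0 hr1).mul_left M).of_norm_bounded fun i => by
      rw [norm_mul, norm_pow]; exact mul_le_mul_of_nonneg_right (ha i) (by positivity)
  have hhead : ∑ i ∈ range (n + 1), a i * x ^ (n - i)
      = -∑' j, a (j + (n + 1)) * x⁻¹ ^ (j + 1) := by
    have hsplit := hsummable.sum_add_tsum_nat_add (n + 1)
    rw [hsum] at hsplit
    calc ∑ i ∈ range (n + 1), a i * x ^ (n - i)
        = x ^ n * ∑ i ∈ range (n + 1), a i * x⁻¹ ^ i := by
          rw [mul_sum]
          refine sum_congr rfl fun i hi => ?_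
          rw [pow_sub₀ _ hx0 (Nat.lt_succ_iff.1 (mem_range.1 hi)), inv_pow]
          ring
      _ = x ^ n * -∑' j, a (j + (n + 1)) * x⁻¹ ^ (j + (n + 1)) := by
          rw [eq_neg_of_add_eq_zero_left hsplit]
      _ = -∑' j, a (j + (n + 1)) * x⁻¹ ^ (j + 1) := by
          rw [mul_neg, ← tsum_mul_left]
          congr 1
          refine tsum_congr fun j => ?_
          rw [show j + (n + 1) = (j + 1) + n by ring, pow_add, inv_pow x n]
          field_simp
  have htail : HasSum (fun j => M * r * r ^ j) (M * r * (1 - r)⁻¹) :=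
    (hasSum_geometric_of_lt_one hr0 hr1).mul_left _
  rw [hhead, norm_neg]
  refine (tsum_of_norm_bounded htail fun j => ?_).trans_eq ?_
  · rw [norm_mul, norm_pow, pow_succ', ← hr, ← mul_assoc]
    exact mul_le_mul_of_nonneg_right (mul_le_mul_of_nonneg_right (ha _) hr0) (by positivity)
  · rw [hr, norm_inv]
    have : ‖x‖ - 1 ≠ 0 := (sub_pos.2 hx).ne'
    field_simp

noncomputable def digitPoly (z : ℕ → ℤ) (n : ℕ) : ℤ[X] :=
  ∑ i ∈ range (n + 1), C (z i) * (-X) ^ (n - i)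

theorem aeval_digitPoly {A : Type*} [CommRing A] (w : A) (z : ℕ → ℤ) (n : ℕ) :
    aeval w (digitPoly z n) = ∑ i ∈ range (n + 1), (z i : A) * (-w) ^ (n - i) := by
  simp [digitPoly]

theorem IsIntegral.finite_setOf_aeval_of_norm_aeval_rootSet_le {β : ℝ} (hβ : IsIntegral ℤ β)
    (B : ℝ) :
    {x : ℝ | ∃ P : ℤ[X], aeval β P = x ∧
      ∀ w ∈ (minpoly ℤ β).rootSet ℂ, ‖aeval w P‖ ≤ B}.Finite := by
  let K := ℚ⟮β⟯
  have : FiniteDimensional ℚ K := adjoin.finiteDimensional hβ.tower_top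
  have : NumberField K := ⟨⟩
  let g : K := AdjoinSimple.gen ℚ β
  have hg : algebraMap K ℝ g = β := AdjoinSimple.algebraMap_gen ℚ β
  have hminpoly : minpoly ℤ g = minpoly ℤ β := by
    rw [← hg, minpoly.algebraMap_eq (algebraMap K ℝ).injective]
  have hgint : IsIntegral ℤ g := (isIntegral_algebraMap_iff (algebraMap K ℝ).injective).1 (hg ▸ hβ)
  refine ((NumberField.Embeddings.finite_of_norm_le K ℂ B).image (algebraMap K ℝ)).subset ?_
  rintro _ ⟨P, rfl, hP⟩
  refine ⟨aeval g P, ⟨adjoin_le_integralClosure hgint (aeval_mem_adjoin_singleton ℤ g),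
    fun φ => ?_⟩, by rw [← aeval_algebraMap_apply, hg]⟩
  change ‖φ.toIntAlgHom (aeval g P)‖ ≤ B
  rw [← aeval_algHom_apply]
  refine hP _ (mem_rootSet.2 ⟨minpoly.ne_zero hβ, ?_⟩)
  rw [aeval_algHom_apply, ← hminpoly, minpoly.aeval, map_zero]

theorem norm_aeval_digitPoly_le {β : ℝ} (hβ : IsPisot β) {c : ℤ} {z : ℕ → ℤ}
    (hz : MemZset β c z) (n : ℕ) {w : ℂ} (hw : w ∈ (minpoly ℤ β).rootSet ℂ) :
    ‖aeval w (digitPoly z n)‖ ≤ 2 * c / |‖w‖ - 1| := by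
  obtain ⟨hβ1, -, hconj⟩ := hβ
  obtain ⟨hz, hzsum⟩ := hz
  have hzc : ∀ i, |(z i : ℝ)| ≤ 2 * c := fun i => abs_le.2 (by exact_mod_cast hz i)
  rw [aeval_digitPoly]
  by_cases hwβ : w = β
  · subst hwβ
    have hβnorm : ‖(-β : ℝ)‖ = β := by rw [norm_neg, Real.norm_of_nonneg (by linarith)]
    have hreal := norm_sum_mul_pow_sub_le_of_tsum_eq_zero (by rwa [hβnorm])
      (a := fun i => (z i : ℝ)) hzc hzsum n
    rw [hβnorm] at hreal
    have hcast : ∑ i ∈ range (n + 1), (z i : ℂ) * (-(β : ℂ)) ^ (n - i)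
        = ((∑ i ∈ range (n + 1), (z i : ℝ) * (-β) ^ (n - i) : ℝ) : ℂ) := by
      push_cast; rfl
    rwa [hcast, Complex.norm_real, Complex.norm_real, Real.norm_of_nonneg (by linarith : 0 ≤ β),
      abs_of_pos (by linarith : 0 < β - 1)]
  · have hw1 : ‖w‖ < 1 := hconj w (mem_rootSet.1 hw).2 hwβ
    calc _ ≤ 2 * c / (1 - ‖-w‖) :=
          norm_sum_mul_pow_sub_le_of_norm_lt_one (by rwa [norm_neg]) (a := fun i => (z i : ℂ))
            (by simpa using hzc) n
      _ = 2 * c / |‖w‖ - 1| := by rw [norm_neg, abs_sub_comm, abs_of_pos (sub_pos.2 hw1)]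

theorem finitely_many_states_of_pisot_general (β : ℝ) (hβ : IsPisot β) (c : ℤ) :
    {x : ℝ | ∃ (n : ℕ) (z : ℕ → ℤ), MemZset β c z ∧
      x = ∑ i ∈ Finset.range (n + 1), (z i : ℝ) * (-β) ^ (n - i)}.Finite := by
  obtain ⟨B, hB⟩ : BddAbove ((fun w : ℂ => 2 * c / |‖w‖ - 1|) '' (minpoly ℤ β).rootSet ℂ) :=
    ((rootSet_finite _ ℂ).image _).bddAbove
  refine (hβ.2.1.finite_setOf_aeval_of_norm_aeval_rootSet_le B).subset ?_
  rintro _ ⟨n, z, hz, rfl⟩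
  exact ⟨digitPoly z n, aeval_digitPoly β z n,
    fun w hw => (norm_aeval_digitPoly_le hβ hz n hw).trans (hB ⟨w, hw, rfl⟩)⟩

/-- Let `β` be a Pisot number and `c ≥ ⌊β⌋` an integer. The set of all partial-sum values
`Σ_{i=0}^{n} z_i (-β)^{n-i}` over all `n` and all `z ∈ Z_{-β}(2c)` is finite. -/
theorem finitely_many_states_of_pisot (β : ℝ) (hβ : IsPisot β) (c : ℤ) (hc : ⌊β⌋ ≤ c) :
    {x : ℝ | ∃ (n : ℕ) (z : ℕ → ℤ), MemZset β c z ∧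
      x = ∑ i ∈ Finset.range (n + 1), (z i : ℝ) * (-β) ^ (n - i)}.Finite :=
  finitely_many_states_of_pisot_general β hβ c
end

section
/- Let β > 1 be a real number and let δ be the smallest positive integer such that ⌊β⌋/β^{δ−1} + ⌊β⌋/β^{δ} ≤ 1 − {β}, where {β} denotes the fractional part of β. Then there exists a function φ from finite words over A_β = {0, …, ⌈β⌉−1} to {0, …, ⌊β⌋} such that for every sequence (x_j)_{j≥1} ∈ A_β^ℕ with 0 ≤ Σ_{j≥1} x_j β^{−j} < 1/(β+1), the sequence defined by y_j = φ(x_1x_2⋯x_{δ+j}) satisfies Σ_{j≥1} x_j β^{−j} = Σ_{j≥1} y_j(−β)^{−j}. In other words, the conversion from base β to base −β is computable by an on-line algorithm with delay δ. -/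
/-!
The remainders `z n = (-β) ^ n * (X - ∑_{i<n} y i * (-β)⁻¹ ^ (i + 1))` of an output `y` for the
input value `X` satisfy `z (n + 1) = -β * z n - y n`, and `X = ∑ y i * (-β)⁻¹ ^ (i + 1)` as soon
as they stay bounded. The interval `I = [-⌊β⌋β/(β²-1), ⌊β⌋/(β²-1)]` satisfies
`-β • I = I + [0, ⌊β⌋]`, so while `z n ∈ I` some digit in `{0, …, ⌊β⌋}` keeps `z (n + 1) ∈ I`.
The on-line algorithm only knows the remainder of the value of the first `δ + 1 + n` input
digits, which is within `ε = (⌈β⌉ - 1) / (β ^ (δ + 1) * (β - 1))` of `z n`; the delay condition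
gives `1 + 2βε ≤ |I|`, which is the slack needed to pick the digit by rounding that approximation.
-/

/-- The condition `⌊β⌋/β^(δ-1) + ⌊β⌋/β^δ ≤ 1 - {β}` defining the delay of the on-line
conversion algorithm. -/
noncomputable def DelayCond (β : ℝ) (δ : ℕ) : Prop :=
  (⌊β⌋ : ℝ) / β ^ (δ - 1) + (⌊β⌋ : ℝ) / β ^ δ ≤ 1 - Int.fract β

namespace NegBetaConversion

open Finset Set

noncomputable def lowerEnd (β : ℝ) : ℝ := -(⌊β⌋ * β) / (β ^ 2 - 1)

noncomputable def upperEnd (β : ℝ) : ℝ := ⌊β⌋ / (β ^ 2 - 1)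

noncomputable def approxError (β : ℝ) (δ : ℕ) : ℝ := (⌈β⌉ - 1) / (β ^ (δ + 1) * (β - 1))

noncomputable def selectDigit (β : ℝ) (δ : ℕ) (w : ℝ) : ℤ :=
  min ⌊β⌋ (max 0 ⌈-β * w + β * approxError β δ - upperEnd β⌉)

noncomputable def negRemainder (β v : ℝ) (y : ℕ → ℝ) (n : ℕ) : ℝ :=
  (-β) ^ n * (v - ∑ i ∈ range n, y i * (-β)⁻¹ ^ (i + 1))

noncomputable def prefixValue (β : ℝ) (x : ℕ → ℤ) (n : ℕ) : ℝ :=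
  ∑ i ∈ range n, (x i : ℝ) * β⁻¹ ^ (i + 1)

noncomputable def approxRemainder (β : ℝ) (δ : ℕ) (x : ℕ → ℤ) : ℕ → ℝ
  | 0 => prefixValue β x (δ + 1)
  | j + 1 =>
    -β * (approxRemainder β δ x j + (-β) ^ j * (x (δ + 1 + j) * β⁻¹ ^ (δ + 1 + j + 1)))
      - selectDigit β δ (approxRemainder β δ x j)

/-- Only words of length at least `δ + 1` are ever read; shorter ones are padded with zeros. -/
noncomputable def onlineDigit (β : ℝ) (δ : ℕ) (u : List ℤ) : ℤ :=
  selectDigit β δ (approxRemainder β δ (fun i => u.getD i 0) (u.length - (δ + 1)))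

variable {β : ℝ} {δ : ℕ}

theorem summable_mul_pow_succ_of_abs_le {r d : ℝ} (hr : |r| < 1) {x : ℕ → ℝ}
    (hx : ∀ i, |x i| ≤ d) : Summable fun i => x i * r ^ (i + 1) := by
  refine .of_norm_bounded ((summable_geometric_of_lt_one (abs_nonneg r) hr).mul_left (d * |r|))
    fun i => ?_
  rw [Real.norm_eq_abs, abs_mul, abs_pow, pow_succ, ← mul_assoc, mul_right_comm]
  exact mul_le_mul_of_nonneg_right (mul_le_mul_of_nonneg_right (hx i) (abs_nonneg r))
    (by positivity)

theorem tsum_sub_sum_range_mem_Icc (hβ : 1 < β) {d : ℝ} {x : ℕ → ℝ} (hx : ∀ i, x i ∈ Icc 0 d)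
    (n : ℕ) : ∑' i, x i * β⁻¹ ^ (i + 1) - ∑ i ∈ range n, x i * β⁻¹ ^ (i + 1)
      ∈ Icc 0 (d / (β ^ n * (β - 1))) := by
  have hβ₀ : 0 < β := one_pos.trans hβ
  have hr₀ : 0 ≤ β⁻¹ := by positivity
  have hr₁ : β⁻¹ < 1 := inv_lt_one_of_one_lt₀ hβ
  have hsum : Summable fun i => x i * β⁻¹ ^ (i + 1) :=
    summable_mul_pow_succ_of_abs_le (by rwa [abs_of_nonneg hr₀]) fun i =>
      (abs_of_nonneg (hx i).1).trans_le (hx i).2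
  rw [← hsum.sum_add_tsum_nat_add n, add_sub_cancel_left]
  have hgeom : ∑' k : ℕ, d * β⁻¹ ^ (n + 1) * β⁻¹ ^ k = d / (β ^ n * (β - 1)) := by
    rw [tsum_mul_left, tsum_geometric_of_lt_one hr₀ hr₁, inv_pow]
    have hβ₁ : β - 1 ≠ 0 := sub_ne_zero.2 hβ.ne'
    field_simp
    ring
  refine ⟨tsum_nonneg fun k => mul_nonneg (hx _).1 (by positivity), hgeom ▸ ?_⟩
  refine Summable.tsum_le_tsum (fun k => ?_) ((summable_nat_add_iff n).2 hsum)
    ((summable_geometric_of_lt_one hr₀ hr₁).mul_left _)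
  rw [mul_assoc, ← pow_add, show n + 1 + k = k + n + 1 by omega]
  exact mul_le_mul_of_nonneg_right (hx _).2 (by positivity)

section negRemainder

variable {v v' : ℝ} {y : ℕ → ℝ}

theorem negRemainder_zero : negRemainder β v y 0 = v := by
  simp [negRemainder]

theorem negRemainder_succ (hβ : β ≠ 0) (n : ℕ) :
    negRemainder β v y (n + 1) = -β * negRemainder β v y n - y n := by
  have h : (-β) ^ (n + 1) * (-β)⁻¹ ^ (n + 1) = 1 := by
    rw [← mul_pow, mul_inv_cancel₀ (neg_ne_zero.2 hβ), one_pow]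
  simp only [negRemainder, sum_range_succ]
  linear_combination (-y n) * h

theorem negRemainder_sub_negRemainder (n : ℕ) :
    negRemainder β v y n - negRemainder β v' y n = (-β) ^ n * (v - v') := by
  simp only [negRemainder]
  ring

theorem inv_pow_mul_negRemainder (hβ : β ≠ 0) (n : ℕ) :
    (-β)⁻¹ ^ n * negRemainder β v y n = v - ∑ i ∈ range n, y i * (-β)⁻¹ ^ (i + 1) := by
  rw [negRemainder, ← mul_assoc, ← mul_pow, inv_mul_cancel₀ (neg_ne_zero.2 hβ), one_pow, one_mul]

theorem hasSum_of_abs_negRemainder_le (hβ : 1 < β) {M : ℝ}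
    (hM : ∀ n, |negRemainder β v y n| ≤ M) : HasSum (fun j => y j * (-β)⁻¹ ^ (j + 1)) v := by
  have hβ₀ : 0 < β := one_pos.trans hβ
  have hr : |(-β)⁻¹| = β⁻¹ := by rw [abs_inv, abs_neg, abs_of_pos hβ₀]
  have hy : ∀ n, |y n| ≤ β * M + M := fun n => by
    have hsucc := negRemainder_succ (v := v) (y := y) hβ₀.ne' n
    calc |y n| = |-β * negRemainder β v y n - negRemainder β v y (n + 1)| := by
          congr 1; linarith
      _ ≤ β * M + M := by
          refine (abs_sub _ _).trans (add_le_add ?_ (hM _))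
          rw [abs_mul, abs_neg, abs_of_pos hβ₀]
          exact mul_le_mul_of_nonneg_left (hM n) hβ₀.le
  have hsum := summable_mul_pow_succ_of_abs_le (hr ▸ inv_lt_one_of_one_lt₀ hβ) hy
  rw [hsum.hasSum_iff_tendsto_nat]
  have hrem : Filter.Tendsto (fun n => (-β)⁻¹ ^ n * negRemainder β v y n) Filter.atTop
      (nhds 0) := by
    have hgeom := (tendsto_pow_atTop_nhds_zero_of_lt_one (inv_nonneg.2 hβ₀.le)
      (inv_lt_one_of_one_lt₀ hβ)).mul_const M
    rw [zero_mul] at hgeom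
    refine squeeze_zero_norm (fun n => ?_) hgeom
    rw [Real.norm_eq_abs, abs_mul, abs_pow, hr]
    exact mul_le_mul_of_nonneg_left (hM n) (by positivity)
  have hpartial : (fun n => ∑ i ∈ range n, y i * (-β)⁻¹ ^ (i + 1)) =
      fun n => v - (-β)⁻¹ ^ n * negRemainder β v y n :=
    funext fun n => by rw [inv_pow_mul_negRemainder hβ₀.ne', sub_sub_cancel]
  rw [hpartial]
  simpa using (tendsto_const_nhds (x := v)).sub hrem

end negRemainder

theorem sub_min_max_ceil_mem_Icc {L R t q η : ℝ} {a : ℤ} (ha : 0 ≤ a) (ht : t ∈ Icc L (R + a))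
    (hq : q ∈ Icc (t - R) (t - R + η)) (hη : 1 + η ≤ R - L) :
    t - (min a (max 0 ⌈q⌉) : ℤ) ∈ Icc L R := by
  obtain ⟨htL, htR⟩ := ht
  obtain ⟨hqt, hqt'⟩ := hq
  have hceil := Int.le_ceil q
  have hceil' := Int.ceil_lt_add_one q
  rcases lt_or_ge ⌈q⌉ 0 with hneg | hnonneg
  · have hq0 : q < 0 := hceil.trans_lt (by exact_mod_cast hneg)
    rw [max_eq_left hneg.le, min_eq_right ha]
    constructor <;> push_cast <;> linarith
  rcases le_or_gt ⌈q⌉ a with hle | hgt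
  · rw [max_eq_right hnonneg, min_eq_right hle]
    constructor <;> linarith
  · have haq : (a : ℝ) + 1 ≤ ⌈q⌉ := by exact_mod_cast hgt
    rw [max_eq_right hnonneg, min_eq_left hgt.le]
    constructor <;> linarith

theorem selectDigit_nonneg (hβ : 0 ≤ β) (w : ℝ) : 0 ≤ selectDigit β δ w :=
  le_min (Int.floor_nonneg.2 hβ) (le_max_left _ _)

theorem selectDigit_le_floor (w : ℝ) : selectDigit β δ w ≤ ⌊β⌋ :=
  min_le_left _ _

theorem neg_mul_upperEnd : -β * upperEnd β = lowerEnd β := by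
  simp only [upperEnd, lowerEnd]
  ring

theorem neg_mul_lowerEnd (hβ : 1 < β) : -β * lowerEnd β = upperEnd β + ⌊β⌋ := by
  have : β ^ 2 - 1 ≠ 0 := by nlinarith
  simp only [upperEnd, lowerEnd]
  field_simp
  ring

theorem upperEnd_sub_lowerEnd (hβ : 1 < β) : upperEnd β - lowerEnd β = ⌊β⌋ / (β - 1) := by
  have : β - 1 ≠ 0 := by linarith
  have : β + 1 ≠ 0 := by linarith
  simp only [upperEnd, lowerEnd]
  rw [show β ^ 2 - 1 = (β - 1) * (β + 1) by ring]
  field_simp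
  ring

theorem lowerEnd_nonpos (hβ : 1 ≤ β) : lowerEnd β ≤ 0 := by
  have : (0 : ℝ) ≤ ⌊β⌋ := by exact_mod_cast Int.floor_nonneg.2 (zero_le_one.trans hβ)
  have : 0 ≤ β ^ 2 - 1 := by nlinarith
  rw [lowerEnd, neg_div]
  exact neg_nonpos.2 (by positivity)

theorem one_div_add_one_le_upperEnd (hβ : 1 < β) : 1 / (β + 1) ≤ upperEnd β := by
  have : β - 1 < ⌊β⌋ := by linarith [Int.lt_floor_add_one β]
  rw [upperEnd, div_le_div_iff₀ (by linarith) (by nlinarith)]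
  nlinarith

theorem neg_mul_sub_selectDigit_mem_Icc (hβ : 1 < β)
    (hdelay : 1 + 2 * β * approxError β δ ≤ upperEnd β - lowerEnd β) {z w : ℝ}
    (hz : z ∈ Icc (lowerEnd β) (upperEnd β)) (hzw : |z - w| ≤ approxError β δ) :
    -β * z - selectDigit β δ w ∈ Icc (lowerEnd β) (upperEnd β) := by
  have hβ₀ : 0 < β := one_pos.trans hβ
  obtain ⟨hzw₁, hzw₂⟩ := abs_le.1 hzw
  refine sub_min_max_ceil_mem_Icc (Int.floor_nonneg.2 hβ₀.le) ⟨?_, ?_⟩ ⟨?_, ?_⟩ hdelay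
  · rw [← neg_mul_upperEnd]; nlinarith [hz.2]
  · rw [← neg_mul_lowerEnd hβ]; nlinarith [hz.1]
  · nlinarith
  · nlinarith

theorem one_add_two_mul_approxError_le_of_delayCond (hβ : 1 < β) (hδpos : 0 < δ)
    (hδ : DelayCond β δ) : 1 + 2 * β * approxError β δ ≤ upperEnd β - lowerEnd β := by
  have hβ₀ : 0 < β := one_pos.trans hβ
  have hβ₁ : 0 < β - 1 := by linarith
  have hpow : 0 < β ^ δ := pow_pos hβ₀ δ
  have hceil : (⌈β⌉ : ℝ) - 1 ≤ ⌊β⌋ := by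
    have : (⌈β⌉ : ℝ) ≤ ⌊β⌋ + 1 := by exact_mod_cast Int.ceil_le_floor_add_one β
    linarith
  have hfloor : (0 : ℝ) ≤ ⌊β⌋ := by exact_mod_cast Int.floor_nonneg.2 hβ₀.le
  have hδ' : ⌊β⌋ * β + ⌊β⌋ ≤ (1 - β + ⌊β⌋) * β ^ δ := by
    have hsplit : β ^ δ = β ^ (δ - 1) * β := by rw [← pow_succ, Nat.sub_add_cancel hδpos]
    rw [DelayCond, Int.fract, hsplit] at hδ
    rw [hsplit]
    have := pow_pos hβ₀ (δ - 1)
    rw [div_add_div _ _ this.ne' (by positivity), div_le_iff₀ (by positivity)] at hδ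
    nlinarith
  rw [upperEnd_sub_lowerEnd hβ, approxError, pow_succ, le_div_iff₀ hβ₁]
  have : 2 * β * ((⌈β⌉ - 1) / (β ^ δ * β * (β - 1))) * (β - 1) = 2 * (⌈β⌉ - 1) / β ^ δ := by
    field_simp
  rw [add_mul, this, ← le_sub_iff_add_le', div_le_iff₀ hpow]
  nlinarith

theorem approxRemainder_congr {x x' : ℕ → ℤ} (j : ℕ) (h : ∀ i < δ + 1 + j, x i = x' i) :
    approxRemainder β δ x j = approxRemainder β δ x' j := by
  induction j with
  | zero =>
    simp only [approxRemainder, prefixValue]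
    exact sum_congr rfl fun i hi => by rw [h i (by simpa using hi)]
  | succ j ih =>
    simp only [approxRemainder]
    rw [ih fun i hi => h i (by omega), h (δ + 1 + j) (by omega)]

theorem onlineDigit_map_range (x : ℕ → ℤ) (j : ℕ) :
    onlineDigit β δ ((List.range (δ + j + 1)).map x) =
      selectDigit β δ (approxRemainder β δ x j) := by
  rw [onlineDigit, List.length_map, List.length_range, show δ + j + 1 - (δ + 1) = j by omega]
  congr 1
  refine approxRemainder_congr j fun i hi => ?_
  simp [List.getD_eq_getElem?_getD, show i < δ + j + 1 by omega]

theorem approxRemainder_eq_negRemainder (hβ : β ≠ 0) (x : ℕ → ℤ) (j : ℕ) :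
    approxRemainder β δ x j = negRemainder β (prefixValue β x (δ + 1 + j))
      (fun i => selectDigit β δ (approxRemainder β δ x i)) j := by
  induction j with
  | zero => rw [negRemainder_zero]; rfl
  | succ j ih =>
    rw [approxRemainder, negRemainder_succ hβ, ← add_assoc, ih]
    simp only [negRemainder, prefixValue, sum_range_succ]
    ring

theorem abs_negRemainder_sub_approxRemainder_le (hβ : 1 < β) {x : ℕ → ℤ}
    (hx : ∀ j, 0 ≤ x j ∧ x j ≤ ⌈β⌉ - 1) (j : ℕ) :
    |negRemainder β (∑' i, (x i : ℝ) * β⁻¹ ^ (i + 1))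
        (fun i => selectDigit β δ (approxRemainder β δ x i)) j - approxRemainder β δ x j|
      ≤ approxError β δ := by
  have hβ₀ : 0 < β := one_pos.trans hβ
  have hβ₁ : β - 1 ≠ 0 := sub_ne_zero.2 hβ.ne'
  obtain ⟨htail₀, htail⟩ := tsum_sub_sum_range_mem_Icc hβ (d := ⌈β⌉ - 1) (x := fun i => x i)
    (fun i => ⟨by exact_mod_cast (hx i).1, by exact_mod_cast (hx i).2⟩) (δ + 1 + j)
  rw [approxRemainder_eq_negRemainder hβ₀.ne', negRemainder_sub_negRemainder, abs_mul, abs_pow,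
    abs_neg, abs_of_pos hβ₀, prefixValue, abs_of_nonneg htail₀]
  calc _ ≤ β ^ j * ((⌈β⌉ - 1) / (β ^ (δ + 1 + j) * (β - 1))) :=
        mul_le_mul_of_nonneg_left htail (by positivity)
    _ = approxError β δ := by
        rw [approxError, pow_add]
        field_simp

theorem hasSum_selectDigit_approxRemainder (hβ : 1 < β)
    (hdelay : 1 + 2 * β * approxError β δ ≤ upperEnd β - lowerEnd β) {x : ℕ → ℤ}
    (hx : ∀ j, 0 ≤ x j ∧ x j ≤ ⌈β⌉ - 1)
    (hX : ∑' i, (x i : ℝ) * β⁻¹ ^ (i + 1) ∈ Icc (lowerEnd β) (upperEnd β)) :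
    HasSum (fun j => (selectDigit β δ (approxRemainder β δ x j) : ℝ) * (-β)⁻¹ ^ (j + 1))
      (∑' i, (x i : ℝ) * β⁻¹ ^ (i + 1)) := by
  have hmem : ∀ n, negRemainder β (∑' i, (x i : ℝ) * β⁻¹ ^ (i + 1))
      (fun i => selectDigit β δ (approxRemainder β δ x i)) n ∈ Icc (lowerEnd β) (upperEnd β) := by
    intro n
    induction n with
    | zero => rwa [negRemainder_zero]
    | succ n ih =>
      rw [negRemainder_succ (one_pos.trans hβ).ne']
      exact neg_mul_sub_selectDigit_mem_Icc hβ hdelay ih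
        (abs_negRemainder_sub_approxRemainder_le hβ hx n)
  exact hasSum_of_abs_negRemainder_le hβ fun n => abs_le_max_abs_abs (hmem n).1 (hmem n).2

end NegBetaConversion

theorem online_conversion_base_beta_to_neg_beta_general (β : ℝ) (hβ : 1 < β)
    (δ : ℕ) (hδpos : 0 < δ) (hδ : DelayCond β δ) :
    ∃ φ : List ℤ → ℤ, (∀ u, 0 ≤ φ u ∧ φ u ≤ ⌊β⌋) ∧
      ∀ x : ℕ → ℤ, (∀ j, 0 ≤ x j ∧ x j ≤ ⌈β⌉ - 1) →
        0 ≤ ∑' j : ℕ, (x j : ℝ) * (β⁻¹) ^ (j + 1) →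
        (∑' j : ℕ, (x j : ℝ) * (β⁻¹) ^ (j + 1)) < 1 / (β + 1) →
        ∑' j : ℕ, (x j : ℝ) * (β⁻¹) ^ (j + 1) =
          ∑' j : ℕ, ((φ ((List.range (δ + j + 1)).map x) : ℝ)) * ((-β)⁻¹) ^ (j + 1) := by
  open NegBetaConversion in
  refine ⟨onlineDigit β δ, fun u => ⟨selectDigit_nonneg (by linarith) _, selectDigit_le_floor _⟩,
    fun x hx hX₀ hX₁ => ?_⟩
  have hX : ∑' i, (x i : ℝ) * β⁻¹ ^ (i + 1) ∈ Set.Icc (lowerEnd β) (upperEnd β) :=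
    ⟨(lowerEnd_nonpos hβ.le).trans hX₀, hX₁.le.trans (one_div_add_one_le_upperEnd hβ)⟩
  simp_rw [onlineDigit_map_range]
  exact (hasSum_selectDigit_approxRemainder hβ
    (one_add_two_mul_approxError_le_of_delayCond hβ hδpos hδ) hx hX).tsum_eq.symm

/-- There is a conversion from base `β` to base `-β` computable by an on-line algorithm
with delay `δ`, where `δ` is the smallest positive integer satisfying
`⌊β⌋/β^(δ-1) + ⌊β⌋/β^δ ≤ 1 - {β}`: there is a function `φ` from finite words over
`A_β = {0,…,⌈β⌉-1}` to digits in `{0,…,⌊β⌋}` such that for any input `(x_j)_{j≥1}` over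
`A_β` whose value `x = Σ_{j≥1} x_j β^{-j}` lies in `[0, 1/(β+1))`, the output digits
`y_j = φ(x_1 ⋯ x_{δ+j})` satisfy `Σ_{j≥1} x_j β^{-j} = Σ_{j≥1} y_j (-β)^{-j}`.
(Here `x j` is the digit `x_{j+1}`.) -/
theorem online_conversion_base_beta_to_neg_beta (β : ℝ) (hβ : 1 < β)
    (δ : ℕ) (hδpos : 0 < δ) (hδ : DelayCond β δ)
    (hδmin : ∀ δ' : ℕ, 0 < δ' → DelayCond β δ' → δ ≤ δ') :
    ∃ φ : List ℤ → ℤ, (∀ u, 0 ≤ φ u ∧ φ u ≤ ⌊β⌋) ∧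
      ∀ x : ℕ → ℤ, (∀ j, 0 ≤ x j ∧ x j ≤ ⌈β⌉ - 1) →
        0 ≤ ∑' j : ℕ, (x j : ℝ) * (β⁻¹) ^ (j + 1) →
        (∑' j : ℕ, (x j : ℝ) * (β⁻¹) ^ (j + 1)) < 1 / (β + 1) →
        ∑' j : ℕ, (x j : ℝ) * (β⁻¹) ^ (j + 1) =
          ∑' j : ℕ, ((φ ((List.range (δ + j + 1)).map x) : ℝ)) * ((-β)⁻¹) ^ (j + 1) :=
  online_conversion_base_beta_to_neg_beta_general β hβ δ hδpos hδ
end
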